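/- arXiv:2501.07461 — 4 statements merged into one kernel-verified Lean document; each statement's English description precedes it below -/
import Mathlib

section
/- Let E be a real inner product space, 0 < m < L, and let f : E → ℝ be differentiable, m-strongly convex with L-Lipschitz gradient, and let x⋆ ∈ E satisfy ∇f(x⋆) = 0. Define V(x) := (L − m)( f(x) − f(x⋆) − (m/2)‖x − x⋆‖² ) − (1/2)‖∇f(x) − m(x − x⋆)‖². Then for every ρ with 0 ≤ ρ ≤ 1 and all x, y ∈ E: V(x) − ρ² V(y) ≤ ⟨ ∇f(x) − m(x − x⋆), L(x − x⋆) − ∇f(x) − ρ²( L(y − x⋆) − ∇f(y) ) ⟩. -/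
open scoped RealInnerProductSpace

/-- `g` is the gradient of `f` at `x` (stated via the Fréchet derivative and the
canonical map into the dual, so that no completeness assumption is needed). -/
def HasGradAt {E : Type*} [NormedAddCommGroup E] [InnerProductSpace ℝ E]
    (f : E → ℝ) (g : E) (x : E) : Prop :=
  HasFDerivAt f ((InnerProductSpace.toDualMap ℝ E) g : E →L[ℝ] ℝ) x

/-! With `g z = f z - (m/2)‖z - x⋆‖²` and `u = ∇g`, the storage function is
`V = (L - m) (g - g x⋆) - ½‖u‖²`. Strong convexity of `f` makes `g` convex and `L`-smoothness of
`f` makes `g` `(L - m)`-smooth, which bounds the Bregman divergence of `g` from both sides.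
Comparing those two bounds at a well-chosen third point gives the interpolation inequality
`(L - m)(g a - g b) ≤ (L - m)⟪u a, a - b⟫ - ½‖u a - u b‖²`. Taken at `(x, x⋆)` and at `(x, y)`
it bounds `V x` and `V x - V y`, and the claim is the convex combination of the two with weights
`1 - ρ²` and `ρ²`. -/

section
variable {E : Type*} [NormedAddCommGroup E] [InnerProductSpace ℝ E]

def bregmanDiv (φ : E → ℝ) (w : E → E) (a b : E) : ℝ := φ b - φ a - ⟪w a, b - a⟫

lemma bregmanDiv_sub_half_mul_norm_sub_sq (φ : E → ℝ) (w : E → E) (m : ℝ) (c a b : E) :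
    bregmanDiv (fun z => φ z - m / 2 * ‖z - c‖ ^ 2) (fun z => w z - m • (z - c)) a b =
      bregmanDiv φ w a b - m / 2 * ‖b - a‖ ^ 2 := by
  have hb : b - c = (b - a) + (a - c) := by abel
  simp only [bregmanDiv, hb, norm_add_sq_real, inner_sub_left, real_inner_smul_left,
    real_inner_comm (a - c)]
  ring

lemma HasGradAt.sub_half_mul_norm_sq {f : E → ℝ} {g x : E} (hf : HasGradAt f g x) (m : ℝ) :
    HasGradAt (fun z => f z - m / 2 * ‖z‖ ^ 2) (g - m • x) x := by
  have hq : HasFDerivAt (fun z : E => m / 2 * ‖z‖ ^ 2) ((m / 2) • (2 • innerSL ℝ x)) x :=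
    (hasStrictFDerivAt_norm_sq x).hasFDerivAt.const_smul (m / 2)
  have hgrad : ((InnerProductSpace.toDualMap ℝ E) g : E →L[ℝ] ℝ) - (m / 2) • (2 • innerSL ℝ x) =
      (InnerProductSpace.toDualMap ℝ E) (g - m • x) := by
    ext e
    simp only [sub_apply, InnerProductSpace.toDualMap_apply_apply,
      smul_apply, coe_innerSL_apply, nsmul_eq_mul, Nat.cast_ofNat,
      smul_eq_mul, inner_sub_left, real_inner_smul_left]
    ring
  have h := hf.sub hq
  rw [hgrad] at h
  exact h

lemma HasGradAt.hasDerivAt_comp_add_smul {f : E → ℝ} {g a d : E} {t : ℝ}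
    (hf : HasGradAt f g (a + t • d)) :
    HasDerivAt (fun s : ℝ => f (a + s • d)) ⟪g, d⟫ t := by
  have hline : HasDerivAt (fun s : ℝ => a + s • d) d t := by
    simpa using ((hasDerivAt_id t).smul_const d).const_add a
  unfold HasGradAt at hf
  have h := hf.comp_hasDerivAt t hline
  simp only [InnerProductSpace.toDualMap_apply_apply] at h
  exact h

lemma ConvexOn.bregmanDiv_nonneg {s : Set E} {φ : E → ℝ} {w : E → E} {a b : E}
    (hφ : ConvexOn ℝ s φ) (ha : a ∈ s) (hb : b ∈ s) (hw : HasGradAt φ (w a) a) :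
    0 ≤ bregmanDiv φ w a b := by
  have hline : ConvexOn ℝ (AffineMap.lineMap a b ⁻¹' s) (fun t : ℝ => φ (a + t • (b - a))) := by
    simpa [Function.comp_def, AffineMap.lineMap_apply_module', add_comm] using
      hφ.comp_affineMap (AffineMap.lineMap a b : ℝ →ᵃ[ℝ] E)
  have hd : HasDerivAt (fun t : ℝ => φ (a + t • (b - a))) ⟪w a, b - a⟫ 0 :=
    HasGradAt.hasDerivAt_comp_add_smul (by simpa using hw)
  have h := hline.le_slope_of_hasDerivAt (by simpa using ha) (by simpa using hb) one_pos hd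
  simp only [slope_def_field, one_smul, add_sub_cancel, zero_smul, add_zero, sub_zero,
    div_one] at h
  simp only [bregmanDiv]
  linarith

lemma bregmanDiv_le_of_lipschitz {f : E → ℝ} {f' : E → E} {L : ℝ}
    (hf : ∀ x, HasGradAt f (f' x) x) (hlip : ∀ x y, ‖f' x - f' y‖ ≤ L * ‖x - y‖) (a b : E) :
    bregmanDiv f f' a b ≤ L / 2 * ‖b - a‖ ^ 2 := by
  obtain ⟨d, rfl⟩ : ∃ d, b = a + d := ⟨b - a, by abel⟩
  let χ : ℝ → ℝ := fun t => f (a + t • d) - t * ⟪f' a, d⟫ - L / 2 * t ^ 2 * ‖d‖ ^ 2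
  have hχ : ∀ t, HasDerivAt χ (⟪f' (a + t • d) - f' a, d⟫ - L * t * ‖d‖ ^ 2) t := by
    intro t
    have hq : HasDerivAt (fun t : ℝ => L / 2 * t ^ 2 * ‖d‖ ^ 2) (L * t * ‖d‖ ^ 2) t := by
      refine (((hasDerivAt_pow 2 t).const_mul (L / 2)).mul_const (‖d‖ ^ 2)).congr_deriv ?_
      ring
    refine (((hf _).hasDerivAt_comp_add_smul.sub (hasDerivAt_mul_const _)).sub hq).congr_deriv ?_
    rw [inner_sub_left]
  have hχ_nonpos : ∀ t, 0 < t → ⟪f' (a + t • d) - f' a, d⟫ - L * t * ‖d‖ ^ 2 ≤ 0 := by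
    intro t ht
    have hlip_t : ‖f' (a + t • d) - f' a‖ ≤ L * t * ‖d‖ := by
      simpa [norm_smul, abs_of_pos ht, mul_assoc] using hlip (a + t • d) a
    have := (real_inner_le_norm _ _).trans (mul_le_mul_of_nonneg_right hlip_t (norm_nonneg d))
    nlinarith
  have hanti : AntitoneOn χ (Set.Ici 0) := by
    refine antitoneOn_of_hasDerivWithinAt_nonpos (convex_Ici 0)
      (fun t _ => (hχ t).continuousAt.continuousWithinAt)
      (fun t _ => (hχ t).hasDerivWithinAt) ?_
    rw [interior_Ici]
    exact hχ_nonpos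
  have h : χ 1 ≤ χ 0 := hanti (Set.mem_Ici.2 le_rfl) (Set.mem_Ici.2 zero_le_one) zero_le_one
  simp only [χ, one_smul, zero_smul, add_zero] at h
  simp only [bregmanDiv, add_sub_cancel_left]
  linarith

lemma mul_sub_le_of_bregmanDiv_bounds {g : E → ℝ} {u : E → E} {K : ℝ} (hK : 0 < K)
    (hlow : ∀ a b, 0 ≤ bregmanDiv g u a b)
    (hup : ∀ a b, bregmanDiv g u a b ≤ K / 2 * ‖b - a‖ ^ 2) (a b : E) :
    K * (g a - g b) ≤ K * ⟪u a, a - b⟫ - ‖u a - u b‖ ^ 2 / 2 := by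
  set δ := u a - u b
  -- a gradient step of `g - ⟪u a, ·⟫` from `b` with step size `1 / K`
  set w := b + K⁻¹ • δ
  have h₁ := hlow a w
  have h₂ := hup b w
  have hwa : w - a = -(a - b) + K⁻¹ • δ := by simp only [w]; abel
  have hwb : w - b = K⁻¹ • δ := by simp only [w]; abel
  have hδ : ⟪u a, δ⟫ - ⟪u b, δ⟫ = ‖δ‖ ^ 2 := by
    rw [← inner_sub_left, real_inner_self_eq_norm_sq]
  simp only [bregmanDiv, hwa, hwb, inner_add_right, inner_neg_right, real_inner_smul_right,
    norm_smul, mul_pow, norm_inv, Real.norm_eq_abs, abs_of_pos hK] at h₁ h₂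
  have hKK : K * K⁻¹ = 1 := mul_inv_cancel₀ hK.ne'
  linear_combination K * h₁ + K * h₂ - K * K⁻¹ * hδ + (K * K⁻¹ - 1) * ‖δ‖ ^ 2 / 2 * hKK

lemma storage_sub_le_of_interpolation {g : E → ℝ} {u : E → E} {K : ℝ} {c : E}
    (hint : ∀ a b, K * (g a - g b) ≤ K * ⟪u a, a - b⟫ - ‖u a - u b‖ ^ 2 / 2) (hc : u c = 0)
    {t : ℝ} (ht₀ : 0 ≤ t) (ht₁ : t ≤ 1) (x y : E) :
    (K * (g x - g c) - ‖u x‖ ^ 2 / 2) - t * (K * (g y - g c) - ‖u y‖ ^ 2 / 2) ≤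
      ⟪u x, K • (x - c) - u x - t • (K • (y - c) - u y)⟫ := by
  have hxc := hint x c
  have hxy := hint x y
  rw [hc, sub_zero] at hxc
  rw [norm_sub_sq_real] at hxy
  simp only [inner_sub_right, real_inner_smul_right, real_inner_self_eq_norm_sq] at hxc hxy ⊢
  linarith [mul_le_mul_of_nonneg_left hxc (sub_nonneg.2 ht₁), mul_le_mul_of_nonneg_left hxy ht₀]
end

theorem storage_rho_increment_general {E : Type*} [NormedAddCommGroup E] [InnerProductSpace ℝ E]
    (m L : ℝ) (hmL : m < L)
    (f : E → ℝ) (f' : E → E)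
    (hgrad : ∀ x, HasGradAt f (f' x) x)
    (hsc : ConvexOn ℝ Set.univ (fun x => f x - m / 2 * ‖x‖ ^ 2))
    (hlip : ∀ x y, ‖f' x - f' y‖ ≤ L * ‖x - y‖)
    (xstar : E) (hstar : f' xstar = 0)
    (V : E → ℝ)
    (hV : ∀ x, V x = (L - m) * (f x - f xstar - m / 2 * ‖x - xstar‖ ^ 2)
        - 1 / 2 * ‖f' x - m • (x - xstar)‖ ^ 2) :
    ∀ ρ : ℝ, 0 ≤ ρ → ρ ≤ 1 → ∀ x y : E,
      V x - ρ ^ 2 * V y ≤ ⟪f' x - m • (x - xstar),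
        L • (x - xstar) - f' x - ρ ^ 2 • (L • (y - xstar) - f' y)⟫ := by
  intro ρ hρ₀ hρ₁ x y
  set g : E → ℝ := fun z => f z - m / 2 * ‖z - xstar‖ ^ 2
  set u : E → E := fun z => f' z - m • (z - xstar)
  have hshift : ∀ a b, bregmanDiv g u a b = bregmanDiv f f' a b - m / 2 * ‖b - a‖ ^ 2 :=
    bregmanDiv_sub_half_mul_norm_sub_sq f f' m xstar
  have hlow : ∀ a b, 0 ≤ bregmanDiv g u a b := fun a b => by
    have hφ := bregmanDiv_sub_half_mul_norm_sub_sq f f' m 0 a b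
    simp only [sub_zero] at hφ
    rw [hshift, ← hφ]
    exact hsc.bregmanDiv_nonneg (Set.mem_univ a) (Set.mem_univ b) ((hgrad a).sub_half_mul_norm_sq m)
  have hup : ∀ a b, bregmanDiv g u a b ≤ (L - m) / 2 * ‖b - a‖ ^ 2 := fun a b => by
    rw [hshift]
    linarith [bregmanDiv_le_of_lipschitz hgrad hlip a b]
  have key := storage_sub_le_of_interpolation
    (mul_sub_le_of_bregmanDiv_bounds (sub_pos.2 hmL) hlow hup)
    (show u xstar = 0 by simp [u, hstar]) (sq_nonneg ρ) (pow_le_one₀ hρ₀ hρ₁) x y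
  have hVg : ∀ z, V z = (L - m) * (g z - g xstar) - ‖u z‖ ^ 2 / 2 := fun z => by
    rw [hV]
    simp only [g, u, sub_self, norm_zero]
    ring
  have hvec : ∀ z, L • (z - xstar) - f' z = (L - m) • (z - xstar) - u z := fun z => by
    simp only [u]
    module
  rw [hVg, hVg, hvec, hvec]
  exact key

/-- ρ²-weighted increment (dissipation) inequality for the storage function `V`. -/
theorem storage_rho_increment {E : Type*} [NormedAddCommGroup E] [InnerProductSpace ℝ E]
    (m L : ℝ) (hm : 0 < m) (hmL : m < L)
    (f : E → ℝ) (f' : E → E)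
    (hgrad : ∀ x, HasGradAt f (f' x) x)
    (hsc : ConvexOn ℝ Set.univ (fun x => f x - m / 2 * ‖x‖ ^ 2))
    (hlip : ∀ x y, ‖f' x - f' y‖ ≤ L * ‖x - y‖)
    (xstar : E) (hstar : f' xstar = 0)
    (V : E → ℝ)
    (hV : ∀ x, V x = (L - m) * (f x - f xstar - m / 2 * ‖x - xstar‖ ^ 2)
        - 1 / 2 * ‖f' x - m • (x - xstar)‖ ^ 2) :
    ∀ ρ : ℝ, 0 ≤ ρ → ρ ≤ 1 → ∀ x y : E,
      V x - ρ ^ 2 * V y ≤ ⟪f' x - m • (x - xstar),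
        L • (x - xstar) - f' x - ρ ^ 2 • (L • (y - xstar) - f' y)⟫ :=
  storage_rho_increment_general m L hmL f f' hgrad hsc hlip xstar hstar V hV
end

section
/- Let E be a real inner product space, 0 < m < L, and let f : E → ℝ be differentiable, m-strongly convex with L-Lipschitz gradient, and let x⋆ ∈ E satisfy ∇f(x⋆) = 0. Define V(x) := (L − m)( f(x) − f(x⋆) − (m/2)‖x − x⋆‖² ) − (1/2)‖∇f(x) − m(x − x⋆)‖². Then for all x ∈ E: V(x) ≤ ⟨ ∇f(x) − m(x − x⋆), L(x − x⋆) − ∇f(x) ⟩. -/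
open scoped RealInnerProductSpace

/-! With `φ y = f y - m / 2 * ‖y - x⋆‖ ^ 2`, the claim reads
`(L - m) (φ x - φ x⋆) ≤ (L - m) ⟪∇φ x, x - x⋆⟫ - ‖∇φ x‖² / 2`.
The function `φ` is convex, and the descent lemma for `f` at its critical point `x⋆` bounds it
above by the quadratic `φ x⋆ + (L - m) / 2 ‖z - x⋆‖²`. Evaluating the supporting hyperplane of
`φ` at `x` against this quadratic bound at `z = x⋆ + ∇φ x / (L - m)` gives the claim. -/

open Set

theorem ConvexOn.add_le_of_hasFDerivAt {F : Type*} [NormedAddCommGroup F] [NormedSpace ℝ F]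
    {φ : F → ℝ} {φ' : F →L[ℝ] ℝ} {a : F} (hφ : ConvexOn ℝ univ φ) (hφ' : HasFDerivAt φ φ' a)
    (b : F) : φ a + φ' (b - a) ≤ φ b := by
  have hline : ConvexOn ℝ univ (φ ∘ AffineMap.lineMap (k := ℝ) a b) := by
    simpa using hφ.comp_affineMap (AffineMap.lineMap a b)
  have hderiv : HasDerivAt (φ ∘ AffineMap.lineMap (k := ℝ) a b) (φ' (b - a)) 0 := by
    have hφ0 : HasFDerivAt φ φ' (AffineMap.lineMap a b (0 : ℝ)) := by simpa using hφ'
    exact hφ0.comp_hasDerivAt (0 : ℝ) AffineMap.hasDerivAt_lineMap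
  have := hline.le_slope_of_hasDerivAt (mem_univ 0) (mem_univ 1) zero_lt_one hderiv
  simp only [slope_def_field, Function.comp_apply, AffineMap.lineMap_apply_zero,
    AffineMap.lineMap_apply_one, sub_zero, div_one] at this
  linarith

section

variable {E : Type*} [NormedAddCommGroup E] [InnerProductSpace ℝ E]

theorem HasGradAt.hasDerivAt_comp_lineMap {f : E → ℝ} {g : E} {a b : E} {t : ℝ}
    (hf : HasGradAt f g (AffineMap.lineMap a b t)) :
    HasDerivAt (fun s : ℝ => f (AffineMap.lineMap a b s)) ⟪g, b - a⟫ t :=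
  hf.comp_hasDerivAt t AffineMap.hasDerivAt_lineMap

theorem le_add_inner_add_sq_of_lipschitz_grad {f : E → ℝ} {g : E → E} {L : ℝ}
    (hg : ∀ x, HasGradAt f (g x) x) (hL : ∀ x y, ‖g x - g y‖ ≤ L * ‖x - y‖) (a b : E) :
    f b ≤ f a + ⟪g a, b - a⟫ + L / 2 * ‖b - a‖ ^ 2 := by
  set v := b - a
  have hderiv (t : ℝ) := (hg (AffineMap.lineMap a b t)).hasDerivAt_comp_lineMap
  have hB (t : ℝ) : HasDerivAt (fun s : ℝ => f a + s * ⟪g a, v⟫ + L / 2 * s ^ 2 * ‖v‖ ^ 2)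
      (⟪g a, v⟫ + L * t * ‖v‖ ^ 2) t := by
    have := (((hasDerivAt_id t).mul_const ⟪g a, v⟫).const_add (f a)).add
      (((hasDerivAt_pow 2 t).const_mul (L / 2)).mul_const (‖v‖ ^ 2))
    exact this.congr_deriv (by push_cast; ring)
  have hbound (t : ℝ) (ht : t ∈ Ico (0 : ℝ) 1) :
      ⟪g (AffineMap.lineMap a b t), v⟫ ≤ ⟪g a, v⟫ + L * t * ‖v‖ ^ 2 := by
    have hdist : ‖AffineMap.lineMap a b t - a‖ = t * ‖v‖ := by
      rw [← vsub_eq_sub, AffineMap.lineMap_vsub_left, norm_smul, Real.norm_of_nonneg ht.1]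
      rfl
    calc ⟪g (AffineMap.lineMap a b t), v⟫
        = ⟪g a, v⟫ + ⟪g (AffineMap.lineMap a b t) - g a, v⟫ := by rw [inner_sub_left]; ring
      _ ≤ ⟪g a, v⟫ + ‖g (AffineMap.lineMap a b t) - g a‖ * ‖v‖ := by
        gcongr
        exact real_inner_le_norm _ _
      _ ≤ ⟪g a, v⟫ + L * (t * ‖v‖) * ‖v‖ := by
        grw [hL, hdist]
      _ = ⟪g a, v⟫ + L * t * ‖v‖ ^ 2 := by ring
  have := image_le_of_deriv_right_le_deriv_boundary (a := 0) (b := 1)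
    (fun t _ => (hderiv t).continuousAt.continuousWithinAt)
    (fun t _ => (hderiv t).hasDerivWithinAt) (by simp)
    (fun t _ => (hB t).continuousAt.continuousWithinAt) (fun t _ => (hB t).hasDerivWithinAt)
    hbound (right_mem_Icc.2 zero_le_one)
  simpa using this

theorem ConvexOn.sub_half_mul_norm_sub_sq {f : E → ℝ} {m : ℝ}
    (hf : ConvexOn ℝ univ fun x => f x - m / 2 * ‖x‖ ^ 2) (c : E) :
    ConvexOn ℝ univ fun x => f x - m / 2 * ‖x - c‖ ^ 2 := by
  have haffine : ConvexOn ℝ univ fun x => m * ⟪c, x⟫ - m / 2 * ‖c‖ ^ 2 :=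
    ((m • innerₛₗ ℝ c).convexOn convex_univ).add_const _
  have hsplit : (fun x => f x - m / 2 * ‖x - c‖ ^ 2)
      = (fun x => f x - m / 2 * ‖x‖ ^ 2) + fun x => m * ⟪c, x⟫ - m / 2 * ‖c‖ ^ 2 := by
    funext x
    rw [Pi.add_apply, norm_sub_sq_real, real_inner_comm]
    ring
  exact hsplit ▸ hf.add haffine

theorem HasGradAt.sub_half_mul_norm_sub_sq {f : E → ℝ} {g x : E} (hf : HasGradAt f g x)
    (m : ℝ) (c : E) :
    HasGradAt (fun y => f y - m / 2 * ‖y - c‖ ^ 2) (g - m • (x - c)) x := by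
  have hsq := ((hasFDerivAt_id x).sub_const c).norm_sq
  unfold HasGradAt at hf ⊢
  refine (hf.sub (hsq.const_mul (m / 2))).congr_fderiv ?_
  ext v
  simp only [id_eq, map_sub, ContinuousLinearMap.comp_id, sub_apply,
    InnerProductSpace.toDualMap_apply_apply, smul_apply, coe_innerSL_apply,
    nsmul_eq_mul, Nat.cast_ofNat, smul_eq_mul, map_smul]
  ring

theorem ConvexOn.mul_sub_le_of_quadratic_bound {φ : E → ℝ} {ψ c x : E} {K : ℝ} (hK : 0 < K)
    (hφ : ConvexOn ℝ univ φ) (hψ : HasGradAt φ ψ x)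
    (hup : ∀ z, φ z ≤ φ c + K / 2 * ‖z - c‖ ^ 2) :
    K * (φ x - φ c) ≤ K * ⟪ψ, x - c⟫ - ‖ψ‖ ^ 2 / 2 := by
  set z := c + K⁻¹ • ψ
  have hsupport := hφ.add_le_of_hasFDerivAt hψ z
  have hz := hup z
  have hzx : ⟪ψ, z - x⟫ = K⁻¹ * ‖ψ‖ ^ 2 - ⟪ψ, x - c⟫ := by
    rw [show z - x = K⁻¹ • ψ - (x - c) by module, inner_sub_right, real_inner_smul_right,
      real_inner_self_eq_norm_sq]
  have hzc : ‖z - c‖ = K⁻¹ * ‖ψ‖ := by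
    rw [add_sub_cancel_left, norm_smul, Real.norm_of_nonneg (inv_nonneg.2 hK.le)]
  rw [InnerProductSpace.toDualMap_apply_apply, hzx] at hsupport
  rw [hzc] at hz
  have hgap : φ x - φ c ≤ ⟪ψ, x - c⟫ - K⁻¹ / 2 * ‖ψ‖ ^ 2 := by
    have : K / 2 * (K⁻¹ * ‖ψ‖) ^ 2 = K⁻¹ / 2 * ‖ψ‖ ^ 2 := by field_simp
    linarith
  calc K * (φ x - φ c) ≤ K * (⟪ψ, x - c⟫ - K⁻¹ / 2 * ‖ψ‖ ^ 2) := by gcongr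
    _ = K * ⟪ψ, x - c⟫ - ‖ψ‖ ^ 2 / 2 := by field_simp

end

theorem storage_le_sector_general {E : Type*} [NormedAddCommGroup E] [InnerProductSpace ℝ E]
    (m L : ℝ) (hmL : m < L)
    (f : E → ℝ) (f' : E → E)
    (hgrad : ∀ x, HasGradAt f (f' x) x)
    (hsc : ConvexOn ℝ Set.univ (fun x => f x - m / 2 * ‖x‖ ^ 2))
    (hlip : ∀ x y, ‖f' x - f' y‖ ≤ L * ‖x - y‖)
    (xstar : E) (hstar : f' xstar = 0)
    (V : E → ℝ)
    (hV : ∀ x, V x = (L - m) * (f x - f xstar - m / 2 * ‖x - xstar‖ ^ 2)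
        - 1 / 2 * ‖f' x - m • (x - xstar)‖ ^ 2) :
    ∀ x : E, V x ≤ ⟪f' x - m • (x - xstar), L • (x - xstar) - f' x⟫ := by
  intro x
  set φ : E → ℝ := fun y => f y - m / 2 * ‖y - xstar‖ ^ 2
  have hφ_upper (z : E) : φ z ≤ φ xstar + (L - m) / 2 * ‖z - xstar‖ ^ 2 := by
    have := le_add_inner_add_sq_of_lipschitz_grad hgrad hlip xstar z
    simp only [φ, hstar, inner_zero_left, sub_self, norm_zero] at this ⊢
    linarith
  have key := (hsc.sub_half_mul_norm_sub_sq xstar).mul_sub_le_of_quadratic_bound (sub_pos.2 hmL)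
    ((hgrad x).sub_half_mul_norm_sub_sq m xstar) hφ_upper
  have hsector : L • (x - xstar) - f' x
      = (L - m) • (x - xstar) - (f' x - m • (x - xstar)) := by module
  rw [hV x, hsector, inner_sub_right, real_inner_self_eq_norm_sq, real_inner_smul_right]
  simp only [sub_self, norm_zero] at key
  linarith

/-- The sector term dominates the initial value of the storage function `V`. -/
theorem storage_le_sector {E : Type*} [NormedAddCommGroup E] [InnerProductSpace ℝ E]
    (m L : ℝ) (hm : 0 < m) (hmL : m < L)
    (f : E → ℝ) (f' : E → E)
    (hgrad : ∀ x, HasGradAt f (f' x) x)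
    (hsc : ConvexOn ℝ Set.univ (fun x => f x - m / 2 * ‖x‖ ^ 2))
    (hlip : ∀ x y, ‖f' x - f' y‖ ≤ L * ‖x - y‖)
    (xstar : E) (hstar : f' xstar = 0)
    (V : E → ℝ)
    (hV : ∀ x, V x = (L - m) * (f x - f xstar - m / 2 * ‖x - xstar‖ ^ 2)
        - 1 / 2 * ‖f' x - m • (x - xstar)‖ ^ 2) :
    ∀ x : E, V x ≤ ⟪f' x - m • (x - xstar), L • (x - xstar) - f' x⟫ :=
  storage_le_sector_general m L hmL f f' hgrad hsc hlip xstar hstar V hV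
end

section
/- Assume the time-varying LPV-algorithm setting with variational IQCs (see context). Suppose there exist ρ ∈ (0,1), constants λ_1,…,λ_p ≥ 0, γ_ξ ≥ 0, γ_δ ≥ 0, 0 < λ̲ ≤ λ̄, and a family P(θ) of symmetric (n_ξ + 4pd)×(n_ξ + 4pd) matrices with λ̲‖v‖² ≤ vᵀP(θ)v ≤ λ̄‖v‖² for all θ ∈ Θ, such that for all (θ, Δθ) ∈ V and all vectors ξ̃ ∈ ℝ^{n_ξ}, ζ = (ζ¹ᵢ, ζ²ᵢ, ζ³ᵢ, ζ⁴ᵢ)_{i=1..p} ∈ ℝ^{4pd}, u ∈ ℝ^{pd} (blocks uⁱ), Δ ∈ ℝ^{n_ξ}, w ∈ ℝ^{pd} (blocks wⁱ), the following dissipation inequality holds: writing s̃ := C(θ)ξ̃ + D(θ)u (blocks s̃ⁱ), η₊ := ( A(θ)ξ̃ + B(θ)u + Δ, ( s̃ⁱ + C₁(θ)Δ, uⁱ − wⁱ, uⁱ − m(θ)s̃ⁱ, a(θ)s̃ⁱ )_{i=1..p} ), and σⁱ := ⟨ L(θ)s̃ⁱ − uⁱ − ρ²L(θ)ζ¹ᵢ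 + ρ²ζ²ᵢ, uⁱ − m(θ)s̃ⁱ ⟩ + ρ²‖ζ⁴ᵢ‖² − ρ² a(θ)² ‖ζ¹ᵢ‖² + (ρ²/2)‖ζ³ᵢ‖² − (ρ²/2)‖ζ²ᵢ − m(θ)ζ¹ᵢ‖², one has ‖η₊‖²_{P(θ+Δθ)} − ρ² ‖(ξ̃, ζ)‖²_{P(θ)} + Σ_{i=1}^{p} λ_i σⁱ − γ_ξ ‖Δ‖² − γ_δ ‖w‖² ≤ 0. Let (θ_k) satisfy (θ_k, θ_{k+1} − θ_k) ∈ V for all k, and let (ξ_k, u_k, y_k) obey ξ_{k+1} = A(θ_k)ξ_k + B(θ_k)u_k, y_k = C(θ_k)ξ_k + D(θ_k)u_k, with blocks s_kⁱ of y_k and u_kⁱ = ∇_x f(s_kⁱ, θ_k). Set x⋆_k := x⋆(θ_k), ξ⋆_k := U x⋆_k, Δξ⋆_k := ξ⋆_k − ξ⋆_{k+1}, Δδ_k(x) := ∇_x f(x, θ_k) − ∇_x f(x, θ_{k+1}), f̂_k(x) := f(x, θ_k) − f(x⋆_k, θ_k), m_k := m(θ_k), L_k := L(θ_k). Then for all k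 ≥ 1: ‖ξ_k − ξ⋆_k‖² ≤ (λ̄/λ̲) ρ^{2k} ‖ξ_0 − ξ⋆_0‖² + (1/λ̲) Σ_{t=1}^{k} ρ^{2(k−t)} ( γ_ξ ‖Δξ⋆_{t−1}‖² + γ_δ Σ_{i=1}^{p} ‖Δδ_{t−1}(s_{t−1}ⁱ)‖² ) + (1/λ̲) Σ_{i=1}^{p} λ_i Σ_{t=1}^{k−1} ρ^{2(k−t)} ( (L_t − m_t) f̂_t(s_{t−1}ⁱ) − (L_{t−1} − m_{t−1}) f̂_{t−1}(s_{t−1}ⁱ) ). -/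
open scoped RealInnerProductSpace

/-- Cast a plain function vector to Euclidean space. -/
def toE {ι : Type*} [Fintype ι] (v : ι → ℝ) : EuclideanSpace ℝ ι := WithLp.toLp 2 v

/-- The `i`-th `d`-dimensional block of a stacked vector. -/
def blk {d r : ℕ} (v : Fin r × Fin d → ℝ) (i : Fin r) : Fin d → ℝ :=
  fun j => v (i, j)

/-- The quadratic form `vᵀ P v`. -/
def quadForm {ι : Type*} [Fintype ι] (P : Matrix ι ι ℝ) (v : ι → ℝ) : ℝ :=
  dotProduct v (P.mulVec v)

/-- Pack the algorithm state and the IQC filter states into a single vector. -/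
def pack (nξ p d : ℕ) (ξ : Fin nξ → ℝ) (ζ : Fin p → Fin 4 → Fin d → ℝ) :
    (Fin nξ ⊕ (Fin p × Fin 4 × Fin d)) → ℝ :=
  Sum.elim ξ (fun z => ζ z.1 z.2.1 z.2.2)

/-!
Write `ξ̃ₖ = ξₖ - U x⋆ₖ` for the tracking error and feed the dissipation inequality at step `k`
with `ξ̃ₖ`, the filter state `ζₖ`, the gradients `uₖ`, the fixed-point drift `Δ = ξ⋆ₖ - ξ⋆ₖ₊₁`
and the gradient drift `w = ∇f(·, θₖ) - ∇f(·, θₖ₊₁)` at the outputs. The next state it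
produces is exactly `(ξ̃ₖ₊₁, ζₖ₊₁)` for the zero-initialised IQC filters, so
`Vₖ = ‖(ξ̃ₖ, ζₖ)‖²_{P(θₖ)}` satisfies `Vₖ₊₁ ≤ ρ² Vₖ + γ_ξ ‖Δ‖² + γ_δ ‖w‖² - Σᵢ λᵢ σⁱₖ`.

For `θ` fixed, `g = f(·, θ) - f(x⋆, θ) - (m/2)‖· - x⋆‖²` is convex with `(L - m)`-Lipschitz
gradient and vanishes to first order at `x⋆`. Its interpolation inequality bounds each supply
rate from below: `σⁱₖ ≥ Rⁱₖ - ρ² Rⁱₖ₋₁ - ρ² Φⁱₖ`, where `R = (L - m) g - ½‖∇g‖² ≥ 0` and `Φ` is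
the variation of `(L - m) f̂` between `θₖ₋₁` and `θₖ`; at `k = 0` the filter state vanishes and
`σⁱ₀ ≥ Rⁱ₀`. Unrolling the recursion, dropping `Rₖ ≥ 0` and using
`λ̲ ‖ξ̃‖² ≤ V` and `V₀ ≤ λ̄ ‖ξ̃₀‖²` (as `ζ₀ = 0`) gives the bound.
-/

section FirstOrder

open Set

variable {E : Type*} [NormedAddCommGroup E] [InnerProductSpace ℝ E] [CompleteSpace E]

theorem HasGradientAt.hasDerivAt_add_smul {g : E → ℝ} {g' x v : E} {t : ℝ}
    (hg : HasGradientAt g g' (x + t • v)) :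
    HasDerivAt (fun s : ℝ => g (x + s • v)) ⟪g', v⟫ t := by
  have hline : HasDerivAt (fun s : ℝ => x + s • v) v t := by
    simpa using ((hasDerivAt_id t).smul_const v).const_add x
  have := (hasGradientAt_iff_hasFDerivAt.mp hg).comp_hasDerivAt t hline
  simp only [InnerProductSpace.toDual_apply_apply] at this
  exact this

theorem ConvexOn.deriv_le_sub {φ : ℝ → ℝ} {φ' : ℝ} (hφ : ConvexOn ℝ univ φ)
    (h : HasDerivAt φ φ' 0) : φ' ≤ φ 1 - φ 0 := by
  simpa [slope_def_field] using
    hφ.le_slope_of_hasDerivAt (mem_univ 0) (mem_univ 1) one_pos h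

theorem ConvexOn.add_inner_le {g : E → ℝ} {g' x : E} (hg : ConvexOn ℝ univ g)
    (hg' : HasGradientAt g g' x) (y : E) : g x + ⟪g', y - x⟫ ≤ g y := by
  have hline : ConvexOn ℝ univ (fun s : ℝ => g (x + s • (y - x))) := by
    have hcomp : (fun s : ℝ => g (x + s • (y - x))) = g ∘ AffineMap.lineMap x y := by
      ext s
      simp [AffineMap.lineMap_apply, add_comm]
    simpa [hcomp] using hg.comp_affineMap (AffineMap.lineMap x y)
  have := hline.deriv_le_sub (HasGradientAt.hasDerivAt_add_smul (by simpa using hg'))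
  simp only [one_smul, add_sub_cancel, zero_smul, add_zero] at this
  linarith

theorem le_add_inner_add_sq_of_inner_sub_le {g : E → ℝ} {g' : E → E} {ℓ : ℝ}
    (hg : ∀ z, HasGradientAt g (g' z) z)
    (hmono : ∀ x y, ⟪g' x - g' y, x - y⟫ ≤ ℓ * ‖x - y‖ ^ 2) (x y : E) :
    g y ≤ g x + ⟪g' x, y - x⟫ + ℓ / 2 * ‖y - x‖ ^ 2 := by
  set v := y - x
  set φ' : ℝ → ℝ := fun s => ℓ * s * ‖v‖ ^ 2 - ⟪g' (x + s • v), v⟫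
  have hφ : ∀ s, HasDerivAt (fun s : ℝ => ℓ / 2 * s ^ 2 * ‖v‖ ^ 2 - g (x + s • v)) (φ' s) s :=
    fun s => ((((hasDerivAt_pow 2 s).const_mul (ℓ / 2)).mul_const (‖v‖ ^ 2)).sub
        (hg (x + s • v)).hasDerivAt_add_smul).congr_deriv
          (by simp only [φ', Nat.cast_ofNat, Nat.add_one_sub_one, pow_one]; ring)
  have hmono' : Monotone φ' := by
    intro s t hst
    rcases hst.eq_or_lt with rfl | hlt
    · rfl
    have h := hmono (x + t • v) (x + s • v)
    rw [add_sub_add_left_eq_sub, ← sub_smul, real_inner_smul_right, norm_smul,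
      Real.norm_of_nonneg (sub_nonneg.mpr hst), inner_sub_left] at h
    simp only [φ']
    nlinarith
  have hconv := Monotone.convexOn_univ_of_deriv (fun s => (hφ s).differentiableAt)
    (by rwa [funext fun s => (hφ s).deriv])
  have := hconv.deriv_le_sub (hφ 0)
  simp only [φ', v, mul_zero, zero_mul, zero_smul, add_zero, zero_sub, one_pow, mul_one, one_smul,
    add_sub_cancel] at this
  linarith

theorem ConvexOn.add_inner_add_sq_le {g : E → ℝ} {g' : E → E} {ℓ : ℝ} (hℓ : 0 < ℓ)
    (hconv : ConvexOn ℝ univ g) (hg : ∀ z, HasGradientAt g (g' z) z)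
    (hmono : ∀ x y, ⟪g' x - g' y, x - y⟫ ≤ ℓ * ‖x - y‖ ^ 2) (u v : E) :
    g v + ⟪g' v, u - v⟫ + 1 / (2 * ℓ) * ‖g' u - g' v‖ ^ 2 ≤ g u := by
  set G := g' u - g' v
  -- evaluate both first-order bounds at the gradient step `u - ℓ⁻¹ G`
  have h1 := hconv.add_inner_le (hg v) (u - ℓ⁻¹ • G)
  have h2 := le_add_inner_add_sq_of_inner_sub_le hg hmono u (u - ℓ⁻¹ • G)
  have hG : ℓ⁻¹ * ⟪g' u, G⟫ - ℓ⁻¹ * ⟪g' v, G⟫ = 2 * (1 / (2 * ℓ) * ‖G‖ ^ 2) := by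
    rw [← mul_sub, ← inner_sub_left, real_inner_self_eq_norm_sq]
    ring
  rw [sub_right_comm, inner_sub_right, real_inner_smul_right] at h1
  rw [sub_sub_cancel_left, inner_neg_right, real_inner_smul_right, norm_neg, norm_smul,
    mul_pow, Real.norm_of_nonneg (inv_nonneg.mpr hℓ.le)] at h2
  have : ℓ / 2 * (ℓ⁻¹ ^ 2 * ‖G‖ ^ 2) = 1 / (2 * ℓ) * ‖G‖ ^ 2 := by field_simp
  linarith

end FirstOrder

section StronglyConvex

open Set

variable {E : Type*} [NormedAddCommGroup E] [InnerProductSpace ℝ E] [CompleteSpace E]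

structure IsSmoothStronglyConvex (F : E → ℝ) (F' : E → E) (m L : ℝ) : Prop where
  hasGradientAt : ∀ x, HasGradientAt F (F' x) x
  convexOn_sub_sq : ConvexOn ℝ univ fun z => F z - m / 2 * ‖z‖ ^ 2
  lipschitz : ∀ x y, ‖F' x - F' y‖ ≤ L * ‖x - y‖

namespace IsSmoothStronglyConvex

variable {F : E → ℝ} {F' : E → E} {m L : ℝ}

theorem hasGradientAt_shift (hF : IsSmoothStronglyConvex F F' m L) (c z : E) :
    HasGradientAt (fun z => F z - F c - m / 2 * ‖z - c‖ ^ 2) (F' z - m • (z - c)) z := by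
  have hsq := (hasStrictFDerivAt_norm_sq (z - c)).hasFDerivAt.comp z
    ((hasFDerivAt_id z).sub_const c)
  rw [hasGradientAt_iff_hasFDerivAt]
  refine (((hasGradientAt_iff_hasFDerivAt.mp (hF.hasGradientAt z)).sub_const (F c)).sub
    (hsq.const_mul (m / 2))).congr_fderiv ?_
  ext w
  simp [real_inner_comm w]
  ring

theorem convexOn_shift (hF : IsSmoothStronglyConvex F F' m L) (c : E) :
    ConvexOn ℝ univ fun z => F z - F c - m / 2 * ‖z - c‖ ^ 2 := by
  refine ((hF.convexOn_sub_sq.add ((m • innerₛₗ ℝ c).convexOn convex_univ)).add_const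
    (-(F c + m / 2 * ‖c‖ ^ 2))).congr fun z _ => ?_
  simp only [Pi.add_apply, LinearMap.smul_apply, innerₛₗ_apply_apply, smul_eq_mul,
    norm_sub_sq_real, real_inner_comm z]
  ring

theorem inner_sub_shift_le (hF : IsSmoothStronglyConvex F F' m L) (c x y : E) :
    ⟪(F' x - m • (x - c)) - (F' y - m • (y - c)), x - y⟫ ≤ (L - m) * ‖x - y‖ ^ 2 := by
  have hxy : (F' x - m • (x - c)) - (F' y - m • (y - c)) = (F' x - F' y) - m • (x - y) := by
    module
  have hcs := (real_inner_le_norm (F' x - F' y) (x - y)).trans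
    (mul_le_mul_of_nonneg_right (hF.lipschitz x y) (norm_nonneg _))
  rw [hxy, inner_sub_left, real_inner_smul_left, real_inner_self_eq_norm_sq]
  linarith

theorem shift_interpolation (hF : IsSmoothStronglyConvex F F' m L) (hmL : m < L)
    (c u v : E) :
    (L - m) * (F v - F c - m / 2 * ‖v - c‖ ^ 2) + (L - m) * ⟪F' v - m • (v - c), u - v⟫
        + 1 / 2 * ‖(F' u - m • (u - c)) - (F' v - m • (v - c))‖ ^ 2
      ≤ (L - m) * (F u - F c - m / 2 * ‖u - c‖ ^ 2) := by
  have hℓ : 0 < L - m := sub_pos.mpr hmL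
  have h := mul_le_mul_of_nonneg_left ((hF.convexOn_shift c).add_inner_add_sq_le hℓ
    (hF.hasGradientAt_shift c) (hF.inner_sub_shift_le c) u v) hℓ.le
  have : (L - m) * (1 / (2 * (L - m))) = 1 / 2 := by field_simp
  linear_combination h - ‖(F' u - m • (u - c)) - (F' v - m • (v - c))‖ ^ 2 * this

end IsSmoothStronglyConvex

end StronglyConvex

section Supply

variable {E : Type*} [NormedAddCommGroup E] [InnerProductSpace ℝ E]

/-- `(L - m) g y - ½ ‖∇g y‖²` for the shifted function `g = F - F c - (m / 2) ‖· - c‖²`;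
the supply rates telescope against it. -/
noncomputable def iqcStorage (F : E → ℝ) (F' : E → E) (m L : ℝ) (c y : E) : ℝ :=
  (L - m) * (F y - F c - m / 2 * ‖y - c‖ ^ 2) - 1 / 2 * ‖F' y - m • (y - c)‖ ^ 2

noncomputable def supplyRate (ρ m L a : ℝ) (s u z₀ z₁ z₂ z₃ : E) : ℝ :=
  ⟪L • s - u - ρ ^ 2 • (L • z₀) + ρ ^ 2 • z₁, u - m • s⟫ + ρ ^ 2 * ‖z₃‖ ^ 2
    - ρ ^ 2 * a ^ 2 * ‖z₀‖ ^ 2 + ρ ^ 2 / 2 * ‖z₂‖ ^ 2 - ρ ^ 2 / 2 * ‖z₁ - m • z₀‖ ^ 2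

namespace IsSmoothStronglyConvex

variable [CompleteSpace E] {F : E → ℝ} {F' : E → E} {m L : ℝ} {c : E}

theorem iqcStorage_nonneg (hF : IsSmoothStronglyConvex F F' m L) (hmL : m < L)
    (hc : F' c = 0) (y : E) : 0 ≤ iqcStorage F F' m L c y := by
  have h := hF.shift_interpolation hmL c y c
  simp only [sub_self, norm_zero, hc, smul_zero, inner_zero_left, sub_zero] at h
  unfold iqcStorage
  linarith

theorem shift_le_inner (hF : IsSmoothStronglyConvex F F' m L) (hmL : m < L)
    (hc : F' c = 0) (y : E) :
    (L - m) * (F y - F c - m / 2 * ‖y - c‖ ^ 2) + 1 / 2 * ‖F' y - m • (y - c)‖ ^ 2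
      ≤ (L - m) * ⟪F' y - m • (y - c), y - c⟫ := by
  have h := hF.shift_interpolation hmL c c y
  rw [← neg_sub y c, inner_neg_right] at h
  simp only [sub_self, norm_zero, hc, smul_zero, zero_sub, norm_neg] at h
  linarith

theorem iqcStorage_le_supplyRate_zero (hF : IsSmoothStronglyConvex F F' m L) (hmL : m < L)
    (hc : F' c = 0) (ρ a : ℝ) (y : E) :
    iqcStorage F F' m L c y ≤ supplyRate ρ m L a (y - c) (F' y) 0 0 0 0 := by
  have h := hF.shift_le_inner hmL hc y
  have hsplit : L • (y - c) - F' y = (L - m) • (y - c) - (F' y - m • (y - c)) := by module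
  simp only [iqcStorage, supplyRate, smul_zero, sub_zero, add_zero, norm_zero]
  rw [hsplit, inner_sub_left, real_inner_smul_left, real_inner_self_eq_norm_sq,
    real_inner_comm]
  linarith

theorem iqcStorage_sub_le_supplyRate (hF : IsSmoothStronglyConvex F F' m L) (hmL : m < L)
    (hc : F' c = 0) {ρ a a₀ m₀ L₀ : ℝ} (hρ : ρ ^ 2 ≤ 1) (ha : a ^ 2 = m * (L - m) / 2)
    (ha₀ : a₀ ^ 2 = m₀ * (L₀ - m₀) / 2) (F₀ : E → ℝ) (F₀' : E → E) (c₀ x y : E) :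
    iqcStorage F F' m L c y - ρ ^ 2 * iqcStorage F₀ F₀' m₀ L₀ c₀ x
        - ρ ^ 2 * ((L - m) * (F x - F c) - (L₀ - m₀) * (F₀ x - F₀ c₀))
      ≤ supplyRate ρ m L a (y - c) (F' y) (x - c) (F' x) (F₀' x - m₀ • (x - c₀))
          (a₀ • (x - c₀)) := by
  have hy := hF.shift_le_inner hmL hc y
  have hxy := hF.shift_interpolation hmL c x y
  simp only [iqcStorage, supplyRate]
  set Gx := F' x - m • (x - c)
  set Gy := F' y - m • (y - c)
  rw [← sub_add_sub_cancel x c y, ← neg_sub y c, inner_add_right, inner_neg_right,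
    norm_sub_sq_real (x := Gx)] at hxy
  -- this is the gap between the two sides: its first bracket is `≥ 0` by `hy`, and by `hxy` the
  -- second is at least minus the first
  have key : 0 ≤ ((L - m) * ⟪Gy, y - c⟫ - 1 / 2 * ‖Gy‖ ^ 2
        - (L - m) * (F y - F c - m / 2 * ‖y - c‖ ^ 2))
      + ρ ^ 2 * ((L - m) * (F x - F c - m / 2 * ‖x - c‖ ^ 2) - (L - m) * ⟪Gy, x - c⟫
        + ⟪Gx, Gy⟫ - 1 / 2 * ‖Gx‖ ^ 2) := by
    nlinarith [mul_nonneg (sub_nonneg.2 hρ) (sub_nonneg.2 hy),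
      mul_nonneg (sq_nonneg ρ) (sub_nonneg.2 hxy)]
  have hsplit : L • (y - c) - F' y - ρ ^ 2 • (L • (x - c)) + ρ ^ 2 • F' x
      = (L - m) • (y - c) - Gy + ρ ^ 2 • (Gx - (L - m) • (x - c)) := by
    simp only [Gx, Gy]; module
  rw [hsplit, inner_add_left, inner_sub_left ((L - m) • (y - c)), real_inner_smul_left,
    real_inner_smul_left, inner_sub_left Gx, real_inner_smul_left, real_inner_self_eq_norm_sq,
    norm_smul, mul_pow,
    Real.norm_eq_abs, sq_abs, ha₀, ha, real_inner_comm Gy (y - c), real_inner_comm Gy (x - c)]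
  linarith

end IsSmoothStronglyConvex

end Supply

section Unrolling

open Finset

theorem sum_Icc_succ_pow_two_mul (ρ : ℝ) (b : ℕ → ℝ) (n j : ℕ) :
    ∑ t ∈ Icc 1 (n + 1), ρ ^ (2 * (n + 1 + j - t)) * b t
      = ρ ^ 2 * ∑ t ∈ Icc 1 n, ρ ^ (2 * (n + j - t)) * b t + ρ ^ (2 * j) * b (n + 1) := by
  rw [sum_Icc_succ_top (by omega), mul_sum, Nat.add_sub_cancel_left]
  congr 1
  refine sum_congr rfl fun t ht => ?_
  rw [show 2 * (n + 1 + j - t) = 2 + 2 * (n + j - t) by grind, pow_add, mul_assoc]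

variable {ρ : ℝ} {V W S R Φ : ℕ → ℝ}

theorem dissipation_unroll (hstep : ∀ j, V (j + 1) ≤ ρ ^ 2 * V j + W (j + 1) - S j)
    (h0 : R 0 ≤ S 0) (hsucc : ∀ t, R (t + 1) - ρ ^ 2 * R t - ρ ^ 2 * Φ (t + 1) ≤ S (t + 1))
    (n : ℕ) :
    V (n + 1) + R n ≤ ρ ^ (2 * (n + 1)) * V 0 + ∑ t ∈ Icc 1 (n + 1), ρ ^ (2 * (n + 1 - t)) * W t
      + ∑ t ∈ Icc 1 n, ρ ^ (2 * (n + 1 - t)) * Φ t := by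
  induction n with
  | zero =>
    simp only [zero_add, mul_one, Icc_self, sum_singleton, tsub_self, mul_zero, pow_zero,
      one_mul, Order.lt_one_iff, Icc_eq_empty_of_lt, sum_empty, add_zero]
    linarith [hstep 0]
  | succ n ih =>
    have hW := sum_Icc_succ_pow_two_mul ρ W (n + 1) 0
    have hΦ := sum_Icc_succ_pow_two_mul ρ Φ n 1
    simp only [add_zero, mul_zero, pow_zero, one_mul, mul_one] at hW hΦ
    rw [hW, hΦ, mul_add 2 (n + 1) 1, mul_one, pow_add]
    linarith [hstep (n + 1), hsucc n, mul_le_mul_of_nonneg_left ih (sq_nonneg ρ)]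

theorem le_of_dissipation {ι : Type*} [Fintype ι] {ρ lo hi : ℝ} {lam : ι → ℝ}
    {V W X : ℕ → ℝ} {σ R Φ : ℕ → ι → ℝ} (hlo : 0 < lo) (hlam : ∀ i, 0 ≤ lam i)
    (hR : ∀ j i, 0 ≤ R j i) (hVlo : ∀ j, lo * X j ≤ V j) (hVhi : V 0 ≤ hi * X 0)
    (hstep : ∀ j, V (j + 1) ≤ ρ ^ 2 * V j + W (j + 1) - ∑ i, lam i * σ j i)
    (h0 : ∀ i, R 0 i ≤ σ 0 i)
    (hsucc : ∀ t i, R (t + 1) i - ρ ^ 2 * R t i - ρ ^ 2 * Φ (t + 1) i ≤ σ (t + 1) i) :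
    ∀ k, 1 ≤ k → X k ≤ hi / lo * ρ ^ (2 * k) * X 0
      + 1 / lo * ∑ t ∈ Icc 1 k, ρ ^ (2 * (k - t)) * W t
      + 1 / lo * ∑ i, lam i * ∑ t ∈ Icc 1 (k - 1), ρ ^ (2 * (k - t)) * Φ t i := by
  intro k hk
  obtain ⟨n, rfl⟩ := Nat.exists_eq_add_of_le' hk
  have h := dissipation_unroll (R := fun j => ∑ i, lam i * R j i)
    (Φ := fun t => ∑ i, lam i * Φ t i) hstep
    (sum_le_sum fun i _ => mul_le_mul_of_nonneg_left (h0 i) (hlam i))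
    (fun t => by
      simp only [mul_sum, ← sum_sub_distrib]
      exact sum_le_sum fun i _ => by linarith [mul_le_mul_of_nonneg_left (hsucc t i) (hlam i)])
    n
  have hRn : 0 ≤ ∑ i, lam i * R n i := sum_nonneg fun i _ => mul_nonneg (hlam i) (hR n i)
  have hΦ : ∑ t ∈ Icc 1 n, ρ ^ (2 * (n + 1 - t)) * ∑ i, lam i * Φ t i
      = ∑ i, lam i * ∑ t ∈ Icc 1 n, ρ ^ (2 * (n + 1 - t)) * Φ t i := by
    simp only [mul_sum]
    rw [sum_comm]
    exact sum_congr rfl fun i _ => sum_congr rfl fun t _ => by ring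
  have hρ : 0 ≤ ρ ^ (2 * (n + 1)) := (even_two_mul _).pow_nonneg ρ
  rw [Nat.add_sub_cancel, ← hΦ]
  field_simp
  linarith [hVlo (n + 1), mul_le_mul_of_nonneg_left hVhi hρ]

end Unrolling

section Blocks

open Matrix

variable {p d : ℕ}

theorem sq_norm_toE_eq_sum_blk (v : Fin p × Fin d → ℝ) :
    ‖toE v‖ ^ 2 = ∑ i, ‖toE (blk v i)‖ ^ 2 := by
  simp only [toE, EuclideanSpace.norm_sq_eq, Fintype.sum_prod_type]
  rfl

theorem sq_norm_toE_pack (nξ : ℕ) (x : Fin nξ → ℝ) (z : Fin p → Fin 4 → Fin d → ℝ) :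
    ‖toE (pack nξ p d x z)‖ ^ 2
      = ‖toE x‖ ^ 2 + ∑ q : Fin p × Fin 4 × Fin d, ‖z q.1 q.2.1 q.2.2‖ ^ 2 := by
  simp only [toE, EuclideanSpace.norm_sq_eq, Fintype.sum_sum_type]
  rfl

theorem sq_norm_toE_le_pack (nξ : ℕ) (x : Fin nξ → ℝ) (z : Fin p → Fin 4 → Fin d → ℝ) :
    ‖toE x‖ ^ 2 ≤ ‖toE (pack nξ p d x z)‖ ^ 2 := by
  rw [sq_norm_toE_pack]
  exact le_add_of_nonneg_right (Finset.sum_nonneg fun _ _ => by positivity)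

theorem sq_norm_toE_pack_zero (nξ : ℕ) (x : Fin nξ → ℝ) :
    ‖toE (pack nξ p d x 0)‖ ^ 2 = ‖toE x‖ ^ 2 := by
  simp [sq_norm_toE_pack]

theorem dotProduct_eq_inner_toE {ι : Type*} [Fintype ι] (v w : ι → ℝ) :
    v ⬝ᵥ w = ⟪toE v, toE w⟫ := by
  simp [dotProduct, PiLp.inner_apply, toE, mul_comm]

end Blocks

section Trajectory

open Matrix

variable {p d nξ : ℕ}

theorem toE_add {ι : Type*} [Fintype ι] (v w : ι → ℝ) : toE (v + w) = toE v + toE w := rfl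

theorem toE_sub {ι : Type*} [Fintype ι] (v w : ι → ℝ) : toE (v - w) = toE v - toE w := rfl

theorem toE_smul {ι : Type*} [Fintype ι] (r : ℝ) (v : ι → ℝ) : toE (r • v) = r • toE v := rfl

theorem tracking_error_succ {A : Matrix (Fin nξ) (Fin nξ) ℝ}
    {B : Matrix (Fin nξ) (Fin p × Fin d) ℝ} {U : Matrix (Fin nξ) (Fin d) ℝ} (hAU : A * U = U)
    {ξ ξ' : Fin nξ → ℝ} {u : Fin p × Fin d → ℝ} (hξ : ξ' = A *ᵥ ξ + B *ᵥ u) (x x' : Fin d → ℝ) :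
    ξ' - U *ᵥ x' = A *ᵥ (ξ - U *ᵥ x) + B *ᵥ u + (U *ᵥ x - U *ᵥ x') := by
  rw [hξ, mulVec_sub, mulVec_mulVec, hAU]
  abel

theorem toE_blk_output_error {C : Matrix (Fin p × Fin d) (Fin nξ) ℝ}
    {D : Matrix (Fin p × Fin d) (Fin p × Fin d) ℝ} {U : Matrix (Fin nξ) (Fin d) ℝ}
    (hCU : ∀ v, C *ᵥ (U *ᵥ v) = fun ij => v ij.2) {ξ : Fin nξ → ℝ} {u y : Fin p × Fin d → ℝ}
    (hy : y = C *ᵥ ξ + D *ᵥ u) (x : EuclideanSpace ℝ (Fin d)) (i : Fin p) :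
    toE (blk (C *ᵥ (ξ - U *ᵥ x) + D *ᵥ u) i) = toE (blk y i) - x := by
  rw [mulVec_sub, hCU, hy]
  ext j
  simp only [toE, blk, PiLp.sub_apply, Pi.add_apply, Pi.sub_apply]
  ring

theorem toE_mulVec_sub {C : Matrix (Fin p × Fin d) (Fin nξ) ℝ} {U : Matrix (Fin nξ) (Fin d) ℝ}
    (hCU : ∀ v, C *ᵥ (U *ᵥ v) = fun ij => v ij.2) (i : Fin p) (x x' : EuclideanSpace ℝ (Fin d)) :
    toE (fun j => (C *ᵥ (U *ᵥ x - U *ᵥ x')) (i, j)) = x - x' := by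
  rw [← mulVec_sub, hCU]
  rfl

/-- The states `(ζ¹, ζ², ζ³, ζ⁴)` of the zero-initialised variational IQC filters, driven by the
output errors `s`, the gradients `u`, the gradient drifts `w` and the fixed-point drifts
`e = C₁ Δξ⋆`. -/
def iqcFilterState (m a : ℕ → ℝ) (s u w : ℕ → Fin p × Fin d → ℝ) (e : ℕ → Fin d → ℝ) :
    ℕ → Fin p → Fin 4 → Fin d → ℝ
  | 0 => 0
  | t + 1 => fun i =>
    ![blk (s t) i + e t, blk (u t) i - blk (w t) i, blk (u t) i - m t • blk (s t) i,
      a t • blk (s t) i]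

theorem lmiSupply_eq_supplyRate (ρ m L a : ℝ) (s u : Fin d → ℝ) (z : Fin 4 → Fin d → ℝ) :
    (L • s - u - ρ ^ 2 • (L • z 0) + ρ ^ 2 • z 1) ⬝ᵥ (u - m • s) + ρ ^ 2 * ‖toE (z 3)‖ ^ 2
        - ρ ^ 2 * a ^ 2 * ‖toE (z 0)‖ ^ 2 + ρ ^ 2 / 2 * ‖toE (z 2)‖ ^ 2
        - ρ ^ 2 / 2 * ‖toE (z 1 - m • z 0)‖ ^ 2
      = supplyRate ρ m L a (toE s) (toE u) (toE (z 0)) (toE (z 1)) (toE (z 2)) (toE (z 3)) := by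
  rw [dotProduct_eq_inner_toE]
  rfl

end Trajectory

theorem tracking_bound_variational_iqc_general
    (d p nξ nθ : ℕ) (hp : 1 ≤ p)
    (Θ : Set (Fin nθ → ℝ)) (Vset : Set ((Fin nθ → ℝ) × (Fin nθ → ℝ)))
    (hV : ∀ θ Δθ : Fin nθ → ℝ, (θ, Δθ) ∈ Vset → θ ∈ Θ ∧ θ + Δθ ∈ Θ)
    (A : (Fin nθ → ℝ) → Matrix (Fin nξ) (Fin nξ) ℝ)
    (B : (Fin nθ → ℝ) → Matrix (Fin nξ) (Fin p × Fin d) ℝ)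
    (C : (Fin nθ → ℝ) → Matrix (Fin p × Fin d) (Fin nξ) ℝ)
    (D : (Fin nθ → ℝ) → Matrix (Fin p × Fin d) (Fin p × Fin d) ℝ)
    (U : Matrix (Fin nξ) (Fin d) ℝ)
    (hAU : ∀ θ ∈ Θ, A θ * U = U)
    (hCU : ∀ θ ∈ Θ, ∀ v : Fin d → ℝ,
      (C θ).mulVec (U.mulVec v) = fun ij => v ij.2)
    (m L : (Fin nθ → ℝ) → ℝ)
    (hmL : ∀ θ ∈ Θ, 0 < m θ ∧ m θ < L θ)
    (a : (Fin nθ → ℝ) → ℝ)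
    (ha : ∀ θ ∈ Θ, a θ = Real.sqrt (m θ * (L θ - m θ) / 2))
    (f : EuclideanSpace ℝ (Fin d) → (Fin nθ → ℝ) → ℝ)
    (f' : (Fin nθ → ℝ) → EuclideanSpace ℝ (Fin d) → EuclideanSpace ℝ (Fin d))
    (hgrad : ∀ θ ∈ Θ, ∀ x, HasGradientAt (fun z => f z θ) (f' θ x) x)
    (hsc : ∀ θ ∈ Θ, ConvexOn ℝ Set.univ (fun z => f z θ - m θ / 2 * ‖z‖ ^ 2))
    (hlip : ∀ θ ∈ Θ, ∀ x y, ‖f' θ x - f' θ y‖ ≤ L θ * ‖x - y‖)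
    (xstar : (Fin nθ → ℝ) → EuclideanSpace ℝ (Fin d))
    (hxstar : ∀ θ ∈ Θ, f' θ (xstar θ) = 0)
    (ρ : ℝ) (hρ0 : 0 < ρ) (hρ1 : ρ < 1)
    (lam : Fin p → ℝ) (hlam : ∀ i, 0 ≤ lam i)
    (γξ γδ : ℝ)
    (lamLo lamHi : ℝ) (hlo : 0 < lamLo)
    (P : (Fin nθ → ℝ) → Matrix (Fin nξ ⊕ (Fin p × Fin 4 × Fin d))
      (Fin nξ ⊕ (Fin p × Fin 4 × Fin d)) ℝ)
    (hPbounds : ∀ θ ∈ Θ, ∀ v : (Fin nξ ⊕ (Fin p × Fin 4 × Fin d)) → ℝ,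
      lamLo * ‖toE v‖ ^ 2 ≤ quadForm (P θ) v ∧
      quadForm (P θ) v ≤ lamHi * ‖toE v‖ ^ 2)
    (hLMI : ∀ θ Δθ : Fin nθ → ℝ, (θ, Δθ) ∈ Vset →
      ∀ (ξt : Fin nξ → ℝ) (ζ : Fin p → Fin 4 → Fin d → ℝ)
        (u : Fin p × Fin d → ℝ) (Δ : Fin nξ → ℝ) (w : Fin p × Fin d → ℝ),
        quadForm (P (θ + Δθ))
            (pack nξ p d ((A θ).mulVec ξt + (B θ).mulVec u + Δ)
              (fun i =>
                ![blk ((C θ).mulVec ξt + (D θ).mulVec u) i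
                    + (fun j => (C θ).mulVec Δ (⟨0, hp⟩, j)),
                  blk u i - blk w i,
                  blk u i - m θ • blk ((C θ).mulVec ξt + (D θ).mulVec u) i,
                  a θ • blk ((C θ).mulVec ξt + (D θ).mulVec u) i]))
          - ρ ^ 2 * quadForm (P θ) (pack nξ p d ξt ζ)
          + (∑ i : Fin p, lam i *
              (dotProduct
                (L θ • blk ((C θ).mulVec ξt + (D θ).mulVec u) i - blk u i
                  - ρ ^ 2 • (L θ • ζ i 0) + ρ ^ 2 • ζ i 1)
                (blk u i - m θ • blk ((C θ).mulVec ξt + (D θ).mulVec u) i)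
               + ρ ^ 2 * ‖toE (ζ i 3)‖ ^ 2
               - ρ ^ 2 * (a θ) ^ 2 * ‖toE (ζ i 0)‖ ^ 2
               + ρ ^ 2 / 2 * ‖toE (ζ i 2)‖ ^ 2
               - ρ ^ 2 / 2 * ‖toE (ζ i 1 - m θ • ζ i 0)‖ ^ 2))
          - γξ * ‖toE Δ‖ ^ 2 - γδ * ‖toE w‖ ^ 2 ≤ 0)
    (θseq : ℕ → Fin nθ → ℝ)
    (hθseq : ∀ k : ℕ, (θseq k, θseq (k + 1) - θseq k) ∈ Vset)
    (ξ : ℕ → Fin nξ → ℝ) (u y : ℕ → Fin p × Fin d → ℝ)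
    (hdyn : ∀ k : ℕ,
      ξ (k + 1) = (A (θseq k)).mulVec (ξ k) + (B (θseq k)).mulVec (u k) ∧
      y k = (C (θseq k)).mulVec (ξ k) + (D (θseq k)).mulVec (u k))
    (hu_grad : ∀ k : ℕ, ∀ i : Fin p,
      toE (blk (u k) i) = f' (θseq k) (toE (blk (y k) i))) :
    ∀ k : ℕ, 1 ≤ k →
      ‖toE (ξ k - U.mulVec (xstar (θseq k)))‖ ^ 2 ≤
        lamHi / lamLo * ρ ^ (2 * k) *
            ‖toE (ξ 0 - U.mulVec (xstar (θseq 0)))‖ ^ 2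
        + (1 / lamLo) * ∑ t ∈ Finset.Icc 1 k, ρ ^ (2 * (k - t)) *
            (γξ * ‖toE (U.mulVec (xstar (θseq (t - 1)))
                - U.mulVec (xstar (θseq t)))‖ ^ 2
             + γδ * ∑ i : Fin p,
                ‖f' (θseq (t - 1)) (toE (blk (y (t - 1)) i))
                  - f' (θseq t) (toE (blk (y (t - 1)) i))‖ ^ 2)
        + (1 / lamLo) * ∑ i : Fin p, lam i *
            ∑ t ∈ Finset.Icc 1 (k - 1), ρ ^ (2 * (k - t)) *
              ((L (θseq t) - m (θseq t)) *
                  (f (toE (blk (y (t - 1)) i)) (θseq t)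
                    - f (xstar (θseq t)) (θseq t))
                - (L (θseq (t - 1)) - m (θseq (t - 1))) *
                  (f (toE (blk (y (t - 1)) i)) (θseq (t - 1))
                    - f (xstar (θseq (t - 1))) (θseq (t - 1)))) := by
  have hΘ : ∀ j, θseq j ∈ Θ := fun j => (hV _ _ (hθseq j)).1
  have hF : ∀ j, IsSmoothStronglyConvex (fun z => f z (θseq j)) (f' (θseq j)) (m (θseq j))
      (L (θseq j)) := fun j => ⟨hgrad _ (hΘ j), hsc _ (hΘ j), hlip _ (hΘ j)⟩
  have hmL' : ∀ j, m (θseq j) < L (θseq j) := fun j => (hmL _ (hΘ j)).2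
  have ha' : ∀ j, a (θseq j) ^ 2 = m (θseq j) * (L (θseq j) - m (θseq j)) / 2 := fun j => by
    have := hmL _ (hΘ j)
    rw [ha _ (hΘ j), Real.sq_sqrt (by nlinarith)]
  have hρ : ρ ^ 2 ≤ 1 := pow_le_one₀ hρ0.le hρ1.le
  set e : ℕ → Fin nξ → ℝ := fun j => ξ j - U.mulVec (xstar (θseq j))
  set s : ℕ → Fin p × Fin d → ℝ := fun j => (C (θseq j)).mulVec (e j) + (D (θseq j)).mulVec (u j)
  set w : ℕ → Fin p × Fin d → ℝ := fun j ij =>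
    (f' (θseq j) (toE (blk (y j) ij.1)) - f' (θseq (j + 1)) (toE (blk (y j) ij.1))) ij.2
  set ζ := iqcFilterState (fun j => m (θseq j)) (fun j => a (θseq j)) s u w fun j k =>
    (C (θseq j)).mulVec (U.mulVec (xstar (θseq j)) - U.mulVec (xstar (θseq (j + 1)))) (⟨0, hp⟩, k)
  set V : ℕ → ℝ := fun j => quadForm (P (θseq j)) (pack nξ p d (e j) (ζ j))
  set σ : ℕ → Fin p → ℝ := fun j i => supplyRate ρ (m (θseq j)) (L (θseq j)) (a (θseq j))
    (toE (blk (s j) i)) (toE (blk (u j) i)) (toE (ζ j i 0)) (toE (ζ j i 1)) (toE (ζ j i 2))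
    (toE (ζ j i 3))
  have hs : ∀ j i, toE (blk (s j) i) = toE (blk (y j) i) - xstar (θseq j) := fun j =>
    toE_blk_output_error (hCU _ (hΘ j)) (hdyn j).2 _
  have hw : ∀ j i, toE (blk (w j) i)
      = f' (θseq j) (toE (blk (y j) i)) - f' (θseq (j + 1)) (toE (blk (y j) i)) :=
    fun _ _ => rfl
  refine le_of_dissipation (V := V) (σ := σ)
    (R := fun j i => iqcStorage (fun z => f z (θseq j)) (f' (θseq j)) (m (θseq j)) (L (θseq j))
      (xstar (θseq j)) (toE (blk (y j) i)))
    hlo hlam ?_ ?_ ?_ ?_ ?_ ?_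
  · exact fun j i => (hF j).iqcStorage_nonneg (hmL' j) (hxstar _ (hΘ j)) _
  · exact fun j => (mul_le_mul_of_nonneg_left (sq_norm_toE_le_pack nξ (e j) (ζ j)) hlo.le).trans
      (hPbounds _ (hΘ j) _).1
  · exact (hPbounds _ (hΘ 0) _).2.trans_eq (by rw [← sq_norm_toE_pack_zero nξ (e 0)]; rfl)
  · intro j
    have H := hLMI _ _ (hθseq j) (e j) (ζ j) (u j)
      (U.mulVec (xstar (θseq j)) - U.mulVec (xstar (θseq (j + 1)))) (w j)
    rw [add_sub_cancel, ← tracking_error_succ (hAU _ (hΘ j)) (hdyn j).1] at H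
    simp only [lmiSupply_eq_supplyRate] at H
    -- the next filter state produced by the dissipation inequality is `ζ (j + 1)` by definition
    have H' : V (j + 1) - ρ ^ 2 * V j + ∑ i, lam i * σ j i
        - γξ * ‖toE (U.mulVec (xstar (θseq j)) - U.mulVec (xstar (θseq (j + 1))))‖ ^ 2
        - γδ * ‖toE (w j)‖ ^ 2 ≤ 0 := H
    simp only [sq_norm_toE_eq_sum_blk (w j), hw, Nat.add_sub_cancel] at H' ⊢
    linarith
  · intro i
    have hζ : ∀ q, toE (ζ 0 i q) = 0 := fun _ => rfl
    simp only [σ, hs, hu_grad, hζ]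
    exact (hF 0).iqcStorage_le_supplyRate_zero (hmL' 0) (hxstar _ (hΘ 0)) _ _ _
  · intro t i
    simp only [σ, ζ, iqcFilterState, Matrix.cons_val_zero, Matrix.cons_val_one,
      Matrix.cons_val_two, Matrix.cons_val_three, Matrix.tail_cons, Matrix.head_cons, toE_add,
      toE_sub, toE_smul, hs, hu_grad, hw, toE_mulVec_sub (hCU _ (hΘ t)), sub_add_sub_cancel,
      sub_sub_cancel, Nat.add_sub_cancel]
    exact (hF (t + 1)).iqcStorage_sub_le_supplyRate (hmL' _) (hxstar _ (hΘ _)) hρ (ha' _) (ha' t)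
      _ _ _ _ _

/-- Tracking theorem with variational IQCs for LPV first-order algorithms on
time-varying strongly convex problems. -/
theorem tracking_bound_variational_iqc
    (d p nξ nθ : ℕ) (hd : 1 ≤ d) (hp : 1 ≤ p)
    (Θ : Set (Fin nθ → ℝ)) (Vset : Set ((Fin nθ → ℝ) × (Fin nθ → ℝ)))
    (hV : ∀ θ Δθ : Fin nθ → ℝ, (θ, Δθ) ∈ Vset → θ ∈ Θ ∧ θ + Δθ ∈ Θ)
    (A : (Fin nθ → ℝ) → Matrix (Fin nξ) (Fin nξ) ℝ)
    (B : (Fin nθ → ℝ) → Matrix (Fin nξ) (Fin p × Fin d) ℝ)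
    (C : (Fin nθ → ℝ) → Matrix (Fin p × Fin d) (Fin nξ) ℝ)
    (D : (Fin nθ → ℝ) → Matrix (Fin p × Fin d) (Fin p × Fin d) ℝ)
    (U : Matrix (Fin nξ) (Fin d) ℝ)
    (hAU : ∀ θ ∈ Θ, A θ * U = U)
    (hCU : ∀ θ ∈ Θ, ∀ v : Fin d → ℝ,
      (C θ).mulVec (U.mulVec v) = fun ij => v ij.2)
    (m L : (Fin nθ → ℝ) → ℝ)
    (hmL : ∀ θ ∈ Θ, 0 < m θ ∧ m θ < L θ)
    (a : (Fin nθ → ℝ) → ℝ)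
    (ha : ∀ θ ∈ Θ, a θ = Real.sqrt (m θ * (L θ - m θ) / 2))
    (f : EuclideanSpace ℝ (Fin d) → (Fin nθ → ℝ) → ℝ)
    (f' : (Fin nθ → ℝ) → EuclideanSpace ℝ (Fin d) → EuclideanSpace ℝ (Fin d))
    (hgrad : ∀ θ ∈ Θ, ∀ x, HasGradientAt (fun z => f z θ) (f' θ x) x)
    (hsc : ∀ θ ∈ Θ, ConvexOn ℝ Set.univ (fun z => f z θ - m θ / 2 * ‖z‖ ^ 2))
    (hlip : ∀ θ ∈ Θ, ∀ x y, ‖f' θ x - f' θ y‖ ≤ L θ * ‖x - y‖)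
    (xstar : (Fin nθ → ℝ) → EuclideanSpace ℝ (Fin d))
    (hxstar : ∀ θ ∈ Θ, f' θ (xstar θ) = 0)
    (ρ : ℝ) (hρ0 : 0 < ρ) (hρ1 : ρ < 1)
    (lam : Fin p → ℝ) (hlam : ∀ i, 0 ≤ lam i)
    (γξ γδ : ℝ) (hγξ : 0 ≤ γξ) (hγδ : 0 ≤ γδ)
    (lamLo lamHi : ℝ) (hlo : 0 < lamLo) (hlohi : lamLo ≤ lamHi)
    (P : (Fin nθ → ℝ) → Matrix (Fin nξ ⊕ (Fin p × Fin 4 × Fin d))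
      (Fin nξ ⊕ (Fin p × Fin 4 × Fin d)) ℝ)
    (hPsymm : ∀ θ ∈ Θ, (P θ).IsSymm)
    (hPbounds : ∀ θ ∈ Θ, ∀ v : (Fin nξ ⊕ (Fin p × Fin 4 × Fin d)) → ℝ,
      lamLo * ‖toE v‖ ^ 2 ≤ quadForm (P θ) v ∧
      quadForm (P θ) v ≤ lamHi * ‖toE v‖ ^ 2)
    (hLMI : ∀ θ Δθ : Fin nθ → ℝ, (θ, Δθ) ∈ Vset →
      ∀ (ξt : Fin nξ → ℝ) (ζ : Fin p → Fin 4 → Fin d → ℝ)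
        (u : Fin p × Fin d → ℝ) (Δ : Fin nξ → ℝ) (w : Fin p × Fin d → ℝ),
        quadForm (P (θ + Δθ))
            (pack nξ p d ((A θ).mulVec ξt + (B θ).mulVec u + Δ)
              (fun i =>
                ![blk ((C θ).mulVec ξt + (D θ).mulVec u) i
                    + (fun j => (C θ).mulVec Δ (⟨0, hp⟩, j)),
                  blk u i - blk w i,
                  blk u i - m θ • blk ((C θ).mulVec ξt + (D θ).mulVec u) i,
                  a θ • blk ((C θ).mulVec ξt + (D θ).mulVec u) i]))
          - ρ ^ 2 * quadForm (P θ) (pack nξ p d ξt ζ)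
          + (∑ i : Fin p, lam i *
              (dotProduct
                (L θ • blk ((C θ).mulVec ξt + (D θ).mulVec u) i - blk u i
                  - ρ ^ 2 • (L θ • ζ i 0) + ρ ^ 2 • ζ i 1)
                (blk u i - m θ • blk ((C θ).mulVec ξt + (D θ).mulVec u) i)
               + ρ ^ 2 * ‖toE (ζ i 3)‖ ^ 2
               - ρ ^ 2 * (a θ) ^ 2 * ‖toE (ζ i 0)‖ ^ 2
               + ρ ^ 2 / 2 * ‖toE (ζ i 2)‖ ^ 2
               - ρ ^ 2 / 2 * ‖toE (ζ i 1 - m θ • ζ i 0)‖ ^ 2))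
          - γξ * ‖toE Δ‖ ^ 2 - γδ * ‖toE w‖ ^ 2 ≤ 0)
    (θseq : ℕ → Fin nθ → ℝ)
    (hθseq : ∀ k : ℕ, (θseq k, θseq (k + 1) - θseq k) ∈ Vset)
    (ξ : ℕ → Fin nξ → ℝ) (u y : ℕ → Fin p × Fin d → ℝ)
    (hdyn : ∀ k : ℕ,
      ξ (k + 1) = (A (θseq k)).mulVec (ξ k) + (B (θseq k)).mulVec (u k) ∧
      y k = (C (θseq k)).mulVec (ξ k) + (D (θseq k)).mulVec (u k))
    (hu_grad : ∀ k : ℕ, ∀ i : Fin p,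
      toE (blk (u k) i) = f' (θseq k) (toE (blk (y k) i))) :
    ∀ k : ℕ, 1 ≤ k →
      ‖toE (ξ k - U.mulVec (xstar (θseq k)))‖ ^ 2 ≤
        lamHi / lamLo * ρ ^ (2 * k) *
            ‖toE (ξ 0 - U.mulVec (xstar (θseq 0)))‖ ^ 2
        + (1 / lamLo) * ∑ t ∈ Finset.Icc 1 k, ρ ^ (2 * (k - t)) *
            (γξ * ‖toE (U.mulVec (xstar (θseq (t - 1)))
                - U.mulVec (xstar (θseq t)))‖ ^ 2
             + γδ * ∑ i : Fin p,
                ‖f' (θseq (t - 1)) (toE (blk (y (t - 1)) i))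
                  - f' (θseq t) (toE (blk (y (t - 1)) i))‖ ^ 2)
        + (1 / lamLo) * ∑ i : Fin p, lam i *
            ∑ t ∈ Finset.Icc 1 (k - 1), ρ ^ (2 * (k - t)) *
              ((L (θseq t) - m (θseq t)) *
                  (f (toE (blk (y (t - 1)) i)) (θseq t)
                    - f (xstar (θseq t)) (θseq t))
                - (L (θseq (t - 1)) - m (θseq (t - 1))) *
                  (f (toE (blk (y (t - 1)) i)) (θseq (t - 1))
                    - f (xstar (θseq (t - 1))) (θseq (t - 1)))) :=
  tracking_bound_variational_iqc_general d p nξ nθ hp Θ Vset hV A B C D U hAU hCU m L hmL a ha f f'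
    hgrad hsc hlip xstar hxstar ρ hρ0 hρ1 lam hlam γξ γδ lamLo lamHi hlo P hPbounds hLMI θseq hθseq
    ξ u y hdyn hu_grad
end

section
/- Let d ≥ 1, 0 < m < L, ρ ∈ (0,1), and let f : ℝ^d → ℝ be differentiable, m-strongly convex with L-Lipschitz gradient, with minimizer x⋆ satisfying ∇f(x⋆) = 0. Let (x_k) be any sequence in ℝ^d and set x̃_k := x_k − x⋆ and ∇_k := ∇f(x_k). Define S_0 := ⟨ L x̃_0 − ∇_0, ∇_0 − m x̃_0 ⟩ and, for k ≥ 1, S_k := ⟨ L x̃_k − ∇_k − ρ² ( L x̃_{k−1} − ∇_{k−1} ), ∇_k − m x̃_k ⟩. Then for every N ≥ 0: Σ_{k=0}^{N} ρ^{−2k} S_k ≥ 0. -/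
open scoped RealInnerProductSpace

/-!
Subtracting `m/2 ‖x‖²` turns `f` into a convex `g` obeying the descent lemma with constant
`L - m`, and rewrites `S k` as the off-by-one supply of `∇g` for the sector `[0, L - m]`.
For such `g` the interpolation inequality `‖∇g a - ∇g b‖² ≤ 2 (L - m) D(a, b)`, with `D` the
Bregman divergence of `g`, applied to the pairs `(x k, x⋆)`, `(x⋆, x k)` and `(x k, x (k+1))`,
shows that the storage `V k = (L - m) D(x k, x⋆) - ‖∇g (x k) - ∇g x⋆‖² / 2` is nonnegative,
with `V 0 ≤ S 0` and `V (k+1) - ρ² V k ≤ S (k+1)`. Weighting by `ρ^(-2k)` and telescoping gives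
`∑ ρ^(-2k) S k ≥ ρ^(-2N) V N ≥ 0`.
-/

section Bregman

variable {E : Type*} [NormedAddCommGroup E] [InnerProductSpace ℝ E]

noncomputable def bregman (g : E → ℝ) (g' : E → E) (a b : E) : ℝ := g a - g b - ⟪g' b, a - b⟫

variable {g : E → ℝ} {g' : E → E} {C : ℝ}

lemma bregman_add_bregman (a b : E) :
    bregman g g' a b + bregman g g' b a = ⟪g' a - g' b, a - b⟫ := by
  simp only [bregman, inner_sub_left, inner_sub_right]
  ring

lemma bregman_sub_bregman (a b c : E) :
    bregman g g' a c - bregman g g' b c = bregman g g' a b + ⟪g' b - g' c, a - b⟫ := by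
  simp only [bregman, inner_sub_left, inner_sub_right]
  ring

lemma bregman_sub_half_sq_norm (m : ℝ) (f : E → ℝ) (f' : E → E) (a b : E) :
    bregman (fun x => f x - m / 2 * ‖x‖ ^ 2) (fun x => f' x - m • x) a b
      = bregman f f' a b - m / 2 * ‖a - b‖ ^ 2 := by
  simp only [bregman, norm_sub_sq_real, inner_sub_left, inner_sub_right, real_inner_smul_left,
    real_inner_self_eq_norm_sq, real_inner_comm a b]
  ring

lemma sq_norm_sub_le_two_mul_bregman (hC : 0 < C) (hconv : ∀ a b, 0 ≤ bregman g g' a b)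
    (hsmooth : ∀ a b, bregman g g' a b ≤ C / 2 * ‖a - b‖ ^ 2) (a b : E) :
    ‖g' a - g' b‖ ^ 2 ≤ 2 * C * bregman g g' a b := by
  set δ := g' a - g' b
  -- at the gradient step `w` from `a`, `0 ≤ D(w, b)` and the descent bound on `D(w, a)`
  -- force `‖δ‖² / 2C ≤ D(a, b)`
  set w := a - C⁻¹ • δ
  have hwa : w - a = -(C⁻¹ • δ) := sub_sub_cancel_left a _
  have hinner : ⟪δ, w - a⟫ = -(C⁻¹ * ‖δ‖ ^ 2) := by
    rw [hwa, inner_neg_right, real_inner_smul_right, real_inner_self_eq_norm_sq]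
  have hdescent : C / 2 * ‖w - a‖ ^ 2 = C⁻¹ * ‖δ‖ ^ 2 / 2 := by
    rw [hwa, norm_neg, norm_smul, mul_pow, Real.norm_eq_abs, sq_abs]
    field_simp
  have hlower : C⁻¹ * ‖δ‖ ^ 2 / 2 ≤ bregman g g' a b := by
    have := bregman_sub_bregman (g := g) (g' := g') w a b
    linarith [hconv w b, hsmooth w a]
  calc ‖δ‖ ^ 2 = 2 * C * (C⁻¹ * ‖δ‖ ^ 2 / 2) := by field_simp
    _ ≤ 2 * C * bregman g g' a b := mul_le_mul_of_nonneg_left hlower (by linarith)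

end Bregman

section Calculus

variable {E : Type*} [NormedAddCommGroup E] [InnerProductSpace ℝ E] [CompleteSpace E]
  {g : E → ℝ} {g' : E → E}

lemma HasGradientAt.hasDerivAt_comp_line {a b v : E} {t : ℝ}
    (h : HasGradientAt g v (b + t • (a - b))) :
    HasDerivAt (fun s : ℝ => g (b + s • (a - b))) ⟪v, a - b⟫ t := by
  have hline : HasDerivAt (fun s : ℝ => b + s • (a - b)) (a - b) t := by
    simpa using ((hasDerivAt_id t).smul_const (a - b)).const_add b
  have := (hasGradientAt_iff_hasFDerivAt.mp h).comp_hasDerivAt t hline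
  simp only [Function.comp_def, InnerProductSpace.toDual_apply_apply] at this
  exact this

lemma HasGradientAt.sub_half_sq_norm {x v : E} (h : HasGradientAt g v x) (m : ℝ) :
    HasGradientAt (fun y => g y - m / 2 * ‖y‖ ^ 2) (v - m • x) x := by
  rw [hasGradientAt_iff_hasFDerivAt] at h ⊢
  refine (h.sub ((hasStrictFDerivAt_norm_sq x).hasFDerivAt.const_smul (m / 2))).congr_fderiv ?_
  ext y
  simp only [sub_apply, smul_apply, map_sub, map_smul,
    InnerProductSpace.toDual_apply_apply, innerSL_apply_apply, smul_eq_mul, nsmul_eq_mul]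
  ring

lemma ConvexOn.bregman_nonneg (hc : ConvexOn ℝ Set.univ g) {b : E} (hb : HasGradientAt g (g' b) b)
    (a : E) : 0 ≤ bregman g g' a b := by
  have hline : ConvexOn ℝ Set.univ (fun s : ℝ => g (b + s • (a - b))) := by
    have h := hc.comp_affineMap (AffineMap.lineMap b a)
    rw [Set.preimage_univ] at h
    have e : (fun s : ℝ => g (b + s • (a - b))) = g ∘ AffineMap.lineMap b a := by
      funext s
      simp [AffineMap.lineMap_apply_module', add_comm]
    rwa [e]
  have hd : HasDerivAt (fun s : ℝ => g (b + s • (a - b))) ⟪g' b, a - b⟫ 0 :=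
    HasGradientAt.hasDerivAt_comp_line (by simpa using hb)
  have := hline.le_slope_of_hasDerivAt (Set.mem_univ 0) (Set.mem_univ 1) one_pos hd
  simp only [slope_def_field, one_smul, add_sub_cancel, zero_smul, add_zero, sub_zero,
    div_one] at this
  rw [bregman]
  linarith

lemma bregman_le_of_lipschitz {C : ℝ} (hg : ∀ x, HasGradientAt g (g' x) x)
    (hlip : ∀ x y, ‖g' x - g' y‖ ≤ C * ‖x - y‖) (a b : E) :
    bregman g g' a b ≤ C / 2 * ‖a - b‖ ^ 2 := by
  set φ : ℝ → ℝ := fun s => g (b + s • (a - b)) - s * ⟪g' b, a - b⟫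
  have hφ : ∀ t : ℝ, HasDerivAt φ ⟪g' (b + t • (a - b)) - g' b, a - b⟫ t := fun t => by
    rw [inner_sub_left]
    exact (hg _).hasDerivAt_comp_line.sub (hasDerivAt_mul_const _)
  have hB : ∀ t : ℝ, HasDerivAt (fun s : ℝ => g b + C / 2 * ‖a - b‖ ^ 2 * s ^ 2)
      (C * ‖a - b‖ ^ 2 * t) t := fun t =>
    (((hasDerivAt_pow 2 t).const_mul _).const_add _).congr_deriv (by norm_num; ring)
  have hbound : ∀ t ∈ Set.Ico (0 : ℝ) 1,
      ⟪g' (b + t • (a - b)) - g' b, a - b⟫ ≤ C * ‖a - b‖ ^ 2 * t := fun t ht => by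
    calc ⟪g' (b + t • (a - b)) - g' b, a - b⟫
        ≤ ‖g' (b + t • (a - b)) - g' b‖ * ‖a - b‖ := real_inner_le_norm _ _
      _ ≤ C * ‖t • (a - b)‖ * ‖a - b‖ := by
          gcongr; simpa using hlip (b + t • (a - b)) b
      _ = C * ‖a - b‖ ^ 2 * t := by
          rw [norm_smul, Real.norm_eq_abs, abs_of_nonneg ht.1]; ring
  have := image_le_of_deriv_right_le_deriv_boundary (a := 0) (b := 1)
    (fun t _ => (hφ t).continuousAt.continuousWithinAt)
    (fun t _ => (hφ t).hasDerivWithinAt) (by simp [φ])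
    (fun t _ => (hB t).continuousAt.continuousWithinAt) (fun t _ => (hB t).hasDerivWithinAt)
    hbound (Set.right_mem_Icc.2 zero_le_one)
  simp only [φ, one_smul, add_sub_cancel, one_mul, one_pow, mul_one] at this
  rw [bregman]
  linarith

end Calculus

namespace OffByOne

variable {E : Type*} [NormedAddCommGroup E] [InnerProductSpace ℝ E]

def supply (C ρ : ℝ) (e u : ℕ → E) : ℕ → ℝ
  | 0 => ⟪C • e 0 - u 0, u 0⟫
  | k + 1 => ⟪C • e (k + 1) - u (k + 1) - ρ ^ 2 • (C • e k - u k), u (k + 1)⟫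

lemma supply_zero (C ρ : ℝ) (e u : ℕ → E) :
    supply C ρ e u 0 = C * ⟪u 0, e 0⟫ - ‖u 0‖ ^ 2 := by
  rw [supply, inner_sub_left, real_inner_smul_left, real_inner_self_eq_norm_sq, real_inner_comm]

lemma supply_succ (C ρ : ℝ) (e u : ℕ → E) (k : ℕ) :
    supply C ρ e u (k + 1) = C * ⟪u (k + 1), e (k + 1)⟫ - ‖u (k + 1)‖ ^ 2
      - ρ ^ 2 * (C * ⟪u (k + 1), e k⟫ - ⟪u k, u (k + 1)⟫) := by
  simp only [supply, inner_sub_left, real_inner_smul_left, real_inner_self_eq_norm_sq,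
    real_inner_comm (e (k + 1)), real_inner_comm (e k)]

noncomputable def storage (g : E → ℝ) (g' : E → E) (C : ℝ) (y a : E) : ℝ :=
  C * bregman g g' a y - ‖g' a - g' y‖ ^ 2 / 2

variable {g : E → ℝ} {g' : E → E} {C ρ : ℝ}

lemma storage_nonneg (hint : ∀ a b, ‖g' a - g' b‖ ^ 2 ≤ 2 * C * bregman g g' a b) (y a : E) :
    0 ≤ storage g g' C y a := by
  have := hint a y
  simp only [storage]
  linarith

lemma mul_bregman_add_sq_le_inner (hint : ∀ a b, ‖g' a - g' b‖ ^ 2 ≤ 2 * C * bregman g g' a b)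
    (y a : E) :
    C * bregman g g' a y + ‖g' a - g' y‖ ^ 2 / 2 ≤ C * ⟪g' a - g' y, a - y⟫ := by
  have h := hint y a
  rw [norm_sub_rev] at h
  rw [← bregman_add_bregman (g := g) (g' := g'), mul_add]
  linarith

lemma mul_bregman_sub_add_sq_le_inner
    (hint : ∀ a b, ‖g' a - g' b‖ ^ 2 ≤ 2 * C * bregman g g' a b) (y a b : E) :
    C * (bregman g g' b y - bregman g g' a y) + ‖g' b - g' a‖ ^ 2 / 2
      ≤ C * ⟪g' b - g' y, b - a⟫ := by
  have h := hint a b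
  rw [norm_sub_rev] at h
  have e := bregman_sub_bregman (g := g) (g' := g') a b y
  have e' : bregman g g' b y - bregman g g' a y = ⟪g' b - g' y, b - a⟫ - bregman g g' a b := by
    rw [← neg_sub a b, inner_neg_right]
    linarith
  rw [e', mul_sub]
  linarith

lemma storage_zero_le_supply (hint : ∀ a b, ‖g' a - g' b‖ ^ 2 ≤ 2 * C * bregman g g' a b)
    (y : E) (x : ℕ → E) :
    storage g g' C y (x 0) ≤ supply C ρ (fun k => x k - y) (fun k => g' (x k) - g' y) 0 := by
  have h := mul_bregman_add_sq_le_inner hint y (x 0)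
  rw [supply_zero, storage]
  linarith

lemma storage_succ_sub_le_supply (hint : ∀ a b, ‖g' a - g' b‖ ^ 2 ≤ 2 * C * bregman g g' a b)
    (hρ : ρ ^ 2 ≤ 1) (y : E) (x : ℕ → E) (k : ℕ) :
    storage g g' C y (x (k + 1)) - ρ ^ 2 * storage g g' C y (x k)
      ≤ supply C ρ (fun k => x k - y) (fun k => g' (x k) - g' y) (k + 1) := by
  have hA := mul_bregman_add_sq_le_inner hint y (x (k + 1))
  have hB := mul_bregman_sub_add_sq_le_inner hint y (x k) (x (k + 1))
  rw [supply_succ, storage, storage]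
  -- the claim is `(1 - ρ²) * hA + ρ² * hB` once both are written in `u₁`, `u₀`, `x k - y`, `x (k+1) - y`
  set u₁ := g' (x (k + 1)) - g' y
  set u₀ := g' (x k) - g' y
  have hu : g' (x (k + 1)) - g' (x k) = u₁ - u₀ := (sub_sub_sub_cancel_right _ _ _).symm
  have hx : x (k + 1) - x k = (x (k + 1) - y) - (x k - y) := (sub_sub_sub_cancel_right _ _ _).symm
  clear_value u₁ u₀
  rw [hu, hx, norm_sub_sq_real, inner_sub_right, real_inner_comm u₀ u₁] at hB
  nlinarith [mul_nonneg (sub_nonneg.2 hρ) (sub_nonneg.2 hA),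
    mul_nonneg (sq_nonneg ρ) (sub_nonneg.2 hB)]

lemma zpow_mul_le_sum_of_le {a V : ℕ → ℝ} (hρ : 0 < ρ) (h0 : V 0 ≤ a 0)
    (hsucc : ∀ k, V (k + 1) - ρ ^ 2 * V k ≤ a (k + 1)) (N : ℕ) :
    ρ ^ (-(2 * (N : ℤ))) * V N ≤ ∑ k ∈ Finset.range (N + 1), ρ ^ (-(2 * (k : ℤ))) * a k := by
  induction N with
  | zero => simpa using h0
  | succ n ih =>
    have hw : ρ ^ (-(2 * ((n + 1 : ℕ) : ℤ))) * ρ ^ 2 = ρ ^ (-(2 * (n : ℤ))) := by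
      rw [← zpow_natCast ρ 2, ← zpow_add₀ hρ.ne']
      push_cast
      ring_nf
    have hstep := mul_le_mul_of_nonneg_left (hsucc n) (zpow_pos hρ (-(2 * ((n + 1 : ℕ) : ℤ)))).le
    calc ρ ^ (-(2 * ((n + 1 : ℕ) : ℤ))) * V (n + 1)
        = ρ ^ (-(2 * ((n + 1 : ℕ) : ℤ))) * (V (n + 1) - ρ ^ 2 * V n)
          + ρ ^ (-(2 * (n : ℤ))) * V n := by rw [← hw]; ring
      _ ≤ ρ ^ (-(2 * ((n + 1 : ℕ) : ℤ))) * a (n + 1)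
          + ∑ k ∈ Finset.range (n + 1), ρ ^ (-(2 * (k : ℤ))) * a k := add_le_add hstep ih
      _ = _ := by rw [Finset.sum_range_succ _ (n + 1), add_comm]

theorem sum_zpow_mul_supply_nonneg
    (hint : ∀ a b, ‖g' a - g' b‖ ^ 2 ≤ 2 * C * bregman g g' a b) (hρ0 : 0 < ρ) (hρ1 : ρ ≤ 1)
    (y : E) (x : ℕ → E) (N : ℕ) :
    0 ≤ ∑ k ∈ Finset.range (N + 1),
      ρ ^ (-(2 * (k : ℤ))) * supply C ρ (fun k => x k - y) (fun k => g' (x k) - g' y) k :=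
  (mul_nonneg (zpow_pos hρ0 _).le (storage_nonneg hint y (x N))).trans <|
    zpow_mul_le_sum_of_le (V := fun k => storage g g' C y (x k)) hρ0
      (storage_zero_le_supply hint y x)
      (storage_succ_sub_le_supply hint (pow_le_one₀ hρ0.le hρ1) y x) N

end OffByOne

theorem static_off_by_one_iqc_general
    (d : ℕ)
    (m L ρ : ℝ) (hmL : m < L) (hρ0 : 0 < ρ) (hρ1 : ρ < 1)
    (f : EuclideanSpace ℝ (Fin d) → ℝ)
    (f' : EuclideanSpace ℝ (Fin d) → EuclideanSpace ℝ (Fin d))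
    (hgrad : ∀ x, HasGradientAt f (f' x) x)
    (hsc : ConvexOn ℝ Set.univ (fun x => f x - m / 2 * ‖x‖ ^ 2))
    (hlip : ∀ x y, ‖f' x - f' y‖ ≤ L * ‖x - y‖)
    (xstar : EuclideanSpace ℝ (Fin d)) (hstar : f' xstar = 0)
    (x : ℕ → EuclideanSpace ℝ (Fin d))
    (S : ℕ → ℝ)
    (hS0 : S 0 = ⟪L • (x 0 - xstar) - f' (x 0), f' (x 0) - m • (x 0 - xstar)⟫)
    (hSk : ∀ k : ℕ, S (k + 1) =
      ⟪L • (x (k + 1) - xstar) - f' (x (k + 1))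
          - ρ ^ 2 • (L • (x k - xstar) - f' (x k)),
        f' (x (k + 1)) - m • (x (k + 1) - xstar)⟫) :
    ∀ N : ℕ, 0 ≤ ∑ k ∈ Finset.range (N + 1), ρ ^ (-(2 * (k : ℤ))) * S k := by
  set g := fun x => f x - m / 2 * ‖x‖ ^ 2
  set g' := fun x => f' x - m • x
  have hg : ∀ x, HasGradientAt g (g' x) x := fun x => (hgrad x).sub_half_sq_norm m
  have hint : ∀ a b, ‖g' a - g' b‖ ^ 2 ≤ 2 * (L - m) * bregman g g' a b :=
    sq_norm_sub_le_two_mul_bregman (sub_pos.2 hmL) (fun a b => hsc.bregman_nonneg (hg b) a)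
      fun a b => by
        rw [bregman_sub_half_sq_norm]
        linarith [bregman_le_of_lipschitz hgrad hlip a b]
  have hu : ∀ k, f' (x k) - m • (x k - xstar) = g' (x k) - g' xstar := fun k => by
    simp only [g', hstar]
    module
  have hsector : ∀ k, L • (x k - xstar) - f' (x k)
      = (L - m) • (x k - xstar) - (g' (x k) - g' xstar) := fun k => by
    rw [← hu]
    module
  have hS : ∀ k, S k = OffByOne.supply (L - m) ρ (fun k => x k - xstar)
      (fun k => g' (x k) - g' xstar) k := by
    rintro (_ | k) <;> simp only [OffByOne.supply, hS0, hSk, hsector, hu]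
  intro N
  simpa only [hS] using OffByOne.sum_zpow_mul_supply_nonneg hint hρ0 hρ1.le xstar x N

/-- Static ρ-weighted off-by-one IQC for the gradient of a strongly convex
smooth function: the accumulated supply is nonnegative. -/
theorem static_off_by_one_iqc
    (d : ℕ) (hd : 1 ≤ d)
    (m L ρ : ℝ) (hm : 0 < m) (hmL : m < L) (hρ0 : 0 < ρ) (hρ1 : ρ < 1)
    (f : EuclideanSpace ℝ (Fin d) → ℝ)
    (f' : EuclideanSpace ℝ (Fin d) → EuclideanSpace ℝ (Fin d))
    (hgrad : ∀ x, HasGradientAt f (f' x) x)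
    (hsc : ConvexOn ℝ Set.univ (fun x => f x - m / 2 * ‖x‖ ^ 2))
    (hlip : ∀ x y, ‖f' x - f' y‖ ≤ L * ‖x - y‖)
    (xstar : EuclideanSpace ℝ (Fin d)) (hstar : f' xstar = 0)
    (x : ℕ → EuclideanSpace ℝ (Fin d))
    (S : ℕ → ℝ)
    (hS0 : S 0 = ⟪L • (x 0 - xstar) - f' (x 0), f' (x 0) - m • (x 0 - xstar)⟫)
    (hSk : ∀ k : ℕ, S (k + 1) =
      ⟪L • (x (k + 1) - xstar) - f' (x (k + 1))
          - ρ ^ 2 • (L • (x k - xstar) - f' (x k)),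
        f' (x (k + 1)) - m • (x (k + 1) - xstar)⟫) :
    ∀ N : ℕ, 0 ≤ ∑ k ∈ Finset.range (N + 1), ρ ^ (-(2 * (k : ℤ))) * S k :=
  static_off_by_one_iqc_general d m L ρ hmL hρ0 hρ1 f f' hgrad hsc hlip xstar hstar x S hS0 hSk
end
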